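/- arXiv:1804.06608 — 7 statements merged into one kernel-verified Lean document; each statement's English description precedes it below -/
import Mathlib

section
/- For any real number β > 1 and any integer n ≥ 1, the number of β-admissible words of length n satisfies β^n ≤ card(Σ_β^n) ≤ β^(n+1)/(β − 1). -/
open Filter MeasureTheory Set

/-- The β-transformation `T_β(x) = βx - ⌊βx⌋`. -/
noncomputable def betaT (β x : ℝ) : ℝ := Int.fract (β * x)

/-- The `(n+1)`-st digit of the β-expansion of `x` (0-indexed):
`betaDigit β x n = ⌊β ⬝ T_β^n(x)⌋`. -/
noncomputable def betaDigit (β x : ℝ) (n : ℕ) : ℕ := (⌊β * (betaT β)^[n] x⌋).toNat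

/-- The set `Σ_β^n` of β-admissible words of length `n`. -/
def admissibleWords (β : ℝ) (n : ℕ) : Set (Fin n → ℕ) :=
  {w | ∃ x ∈ Set.Ico (0:ℝ) 1, ∀ i : Fin n, betaDigit β x i = w i}

/-- The set `Σ_β` of β-admissible digit sequences. -/
def admissibleSeqs (β : ℝ) : Set (ℕ → ℕ) :=
  {e | ∃ x ∈ Set.Ico (0:ℝ) 1, ∀ i, betaDigit β x i = e i}

/-- The cylinder `I_n(w)` of a word `w`. -/
def cylinder (β : ℝ) {n : ℕ} (w : Fin n → ℕ) : Set ℝ :=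
  {x | x ∈ Set.Ico (0:ℝ) 1 ∧ ∀ i : Fin n, betaDigit β x i = w i}

/-- The partial digit sum `S_n(x,β)`. -/
noncomputable def Sdig (β x : ℝ) (n : ℕ) : ℝ := ∑ i ∈ Finset.range n, (betaDigit β x i : ℝ)


noncomputable def Aval (β x : ℝ) (n : ℕ) : ℝ :=
  ∑ k ∈ Finset.range n, (betaDigit β x k : ℝ) / β ^ (k + 1)

lemma iter_mem {β x : ℝ} (hx : x ∈ Set.Ico (0:ℝ) 1) (n : ℕ) :
    (betaT β)^[n] x ∈ Set.Ico (0:ℝ) 1 := by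
  cases n with
  | zero => exact hx
  | succ m =>
    rw [Function.iterate_succ_apply']
    exact ⟨Int.fract_nonneg _, Int.fract_lt_one _⟩

lemma digit_intcast {β x : ℝ} (hβ : 0 < β) (hx : x ∈ Set.Ico (0:ℝ) 1) (n : ℕ) :
    (betaDigit β x n : ℤ) = ⌊β * (betaT β)^[n] x⌋ := by
  exact Int.toNat_of_nonneg (Int.floor_nonneg.2 (mul_nonneg hβ.le (iter_mem hx n).1))

lemma digit_le {β x : ℝ} (hβ : 0 < β) (hx : x ∈ Set.Ico (0:ℝ) 1) (n : ℕ) :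
    (betaDigit β x n : ℝ) ≤ β * (betaT β)^[n] x := by
  have h := digit_intcast hβ hx n
  have := Int.floor_le (β * (betaT β)^[n] x)
  rw [← h] at this
  exact_mod_cast this

lemma expand {β x : ℝ} (hβ : 1 < β) (hx : x ∈ Set.Ico (0:ℝ) 1) (n : ℕ) :
    x = Aval β x n + (betaT β)^[n] x / β ^ n := by
  have hβ0 : (0:ℝ) < β := lt_trans one_pos hβ
  induction n with
  | zero => simp [Aval]
  | succ m ih =>
    have hiter : (betaT β)^[m + 1] x = β * (betaT β)^[m] x - (betaDigit β x m : ℝ) := by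
      rw [Function.iterate_succ_apply', betaT, Int.fract]
      have h := digit_intcast hβ0 hx m
      rw [← h]
      push_cast; ring
    have key : (betaT β)^[m] x / β ^ m
        = (betaDigit β x m : ℝ) / β ^ (m+1) + (betaT β)^[m+1] x / β ^ (m+1) := by
      rw [hiter]
      have hpow1 : (β:ℝ) ^ (m+1) ≠ 0 := by positivity
      field_simp
      ring
    rw [Aval, Finset.sum_range_succ, ← Aval, add_assoc, ← key]
    exact ih

noncomputable def Vw (β : ℝ) {n : ℕ} (w : Fin n → ℕ) : ℝ :=
  ∑ i : Fin n, (w i : ℝ) / β ^ ((i : ℕ) + 1)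

lemma Vw_eq_Aval {β x : ℝ} {n : ℕ} {w : Fin n → ℕ}
    (hw : ∀ i : Fin n, betaDigit β x i = w i) : Vw β w = Aval β x n := by
  rw [Aval, ← Fin.sum_univ_eq_sum_range (fun k => (betaDigit β x k : ℝ) / β ^ (k + 1)) n]
  exact Finset.sum_congr rfl (fun i _ => by rw [hw i])

lemma Aval_nonneg {β x : ℝ} (hβ : 0 < β) (n : ℕ) : 0 ≤ Aval β x n := by
  apply Finset.sum_nonneg
  intro k _
  positivity

lemma Aval_mono {β x : ℝ} (hβ : 0 < β) {m n : ℕ} (h : m ≤ n) :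
    Aval β x m ≤ Aval β x n := by
  apply Finset.sum_le_sum_of_subset_of_nonneg (Finset.range_subset_range.2 h)
  intro k _ _
  positivity

lemma Aval_le_self {β x : ℝ} (hβ : 1 < β) (hx : x ∈ Set.Ico (0:ℝ) 1) (n : ℕ) :
    Aval β x n ≤ x := by
  have h := expand hβ hx n
  have h2 : 0 ≤ (betaT β)^[n] x / β ^ n := by
    have := (iter_mem (β := β) hx n).1
    positivity
  linarith

lemma self_lt_Aval_add {β x : ℝ} (hβ : 1 < β) (hx : x ∈ Set.Ico (0:ℝ) 1) (n : ℕ) :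
    x < Aval β x n + 1 / β ^ n := by
  have h := expand hβ hx n
  have hb : (0:ℝ) < β ^ n := by positivity
  have h2 : (betaT β)^[n] x / β ^ n < 1 / β ^ n :=
    (div_lt_div_iff_of_pos_right hb).2 (iter_mem hx n).2
  linarith

/-- Separation: if digits of `x` and `y` agree below `j` and `x`'s digit at `j`
is smaller, then `x < Aval β y n` for every `n > j`. -/
lemma sep' {β x y : ℝ} (hβ : 1 < β) (hx : x ∈ Set.Ico (0:ℝ) 1)
    (hy : y ∈ Set.Ico (0:ℝ) 1) {j : ℕ}
    (hagree : ∀ k, k < j → betaDigit β x k = betaDigit β y k)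
    (hlt : betaDigit β x j < betaDigit β y j) {n : ℕ} (hjn : j < n) :
    x < Aval β y n := by
  have hβ0 : (0:ℝ) < β := lt_trans one_pos hβ
  have hpow : (0:ℝ) < β ^ (j+1) := by positivity
  have h1 : x = Aval β x (j+1) + (betaT β)^[j+1] x / β ^ (j+1) := expand hβ hx (j+1)
  have h2 : x < Aval β x (j+1) + 1 / β ^ (j+1) := self_lt_Aval_add hβ hx (j+1)
  have hAeq : Aval β x j = Aval β y j :=
    Finset.sum_congr rfl (fun k hk => by
      rw [hagree k (Finset.mem_range.1 hk)])
  have hsx : Aval β x (j+1) = Aval β x j + (betaDigit β x j : ℝ) / β ^ (j+1) :=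
    Finset.sum_range_succ _ _
  have hsy : Aval β y (j+1) = Aval β y j + (betaDigit β y j : ℝ) / β ^ (j+1) :=
    Finset.sum_range_succ _ _
  have hd : (betaDigit β x j : ℝ) + 1 ≤ (betaDigit β y j : ℝ) := by exact_mod_cast hlt
  have h3 : Aval β x (j+1) + 1 / β ^ (j+1) ≤ Aval β y (j+1) := by
    rw [hsx, hsy, hAeq]
    have h5 : ((betaDigit β x j : ℝ) + 1) / β ^ (j+1) ≤ (betaDigit β y j : ℝ) / β ^ (j+1) :=
      (div_le_div_iff_of_pos_right hpow).2 hd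
    rw [add_div] at h5
    linarith
  have h4 : Aval β y (j+1) ≤ Aval β y n := Aval_mono hβ0 hjn
  linarith

lemma digit_le_D {β x : ℝ} (hβ : 0 < β) (hx : x ∈ Set.Ico (0:ℝ) 1) (n : ℕ) :
    betaDigit β x n ≤ (⌊β⌋).toNat := by
  apply Int.toNat_le_toNat
  apply Int.floor_le_floor
  nlinarith [(iter_mem (β := β) hx n).2, (iter_mem (β := β) hx n).1]

lemma adm_finite {β : ℝ} (hβ : 0 < β) (n : ℕ) : (admissibleWords β n).Finite := by
  apply Set.Finite.subset
    (Set.Finite.pi' (fun _ : Fin n => Set.finite_Iic ((⌊β⌋).toNat)))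
  rintro w ⟨x, hx, hw⟩ i
  rw [Set.mem_Iic, ← hw i]
  exact digit_le_D hβ hx i

-- basic facts for admissible words
lemma cyl_nonempty {β : ℝ} {n : ℕ} {w : Fin n → ℕ} (hw : w ∈ admissibleWords β n) :
    (cylinder β w).Nonempty := by
  obtain ⟨x, hx, hd⟩ := hw
  exact ⟨x, hx, hd⟩

lemma cyl_bddAbove {β : ℝ} {n : ℕ} (w : Fin n → ℕ) : BddAbove (cylinder β w) :=
  ⟨1, fun x hx => hx.1.2.le⟩

lemma Vw_nonneg {β : ℝ} (hβ : 0 < β) {n : ℕ} (w : Fin n → ℕ) : 0 ≤ Vw β w := by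
  apply Finset.sum_nonneg; intro i _; positivity

lemma Vw_le_sSup {β : ℝ} (hβ : 1 < β) {n : ℕ} {w : Fin n → ℕ}
    (hw : w ∈ admissibleWords β n) : Vw β w ≤ sSup (cylinder β w) := by
  obtain ⟨x, hx, hd⟩ := hw
  have h1 : Vw β w = Aval β x n := Vw_eq_Aval hd
  have h2 : Aval β x n ≤ x := Aval_le_self hβ hx n
  have h3 : x ≤ sSup (cylinder β w) := le_csSup (cyl_bddAbove w) ⟨hx, hd⟩
  linarith

lemma sSup_le_one {β : ℝ} {n : ℕ} {w : Fin n → ℕ} (hw : w ∈ admissibleWords β n) :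
    sSup (cylinder β w) ≤ 1 :=
  csSup_le (cyl_nonempty hw) (fun x hx => hx.1.2.le)

/-- Strict separation between distinct cylinders. -/
lemma cyl_lt_Vw {β : ℝ} (hβ : 1 < β) {n : ℕ} {w1 w2 : Fin n → ℕ}
    (hw2 : w2 ∈ admissibleWords β n) {j : Fin n}
    (hagree : ∀ k : Fin n, (k : ℕ) < (j : ℕ) → w1 k = w2 k)
    (hlt : w1 j < w2 j) {z : ℝ} (hz : z ∈ cylinder β w1) :
    z < Vw β w2 := by
  obtain ⟨y, hy, hdy⟩ := hw2
  have hV : Vw β w2 = Aval β y n := Vw_eq_Aval hdy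
  rw [hV]
  apply sep' hβ hz.1 hy (j := (j : ℕ)) ?_ ?_ j.isLt
  · intro k hk
    have hkn : k < n := lt_trans hk j.isLt
    have h1 := hz.2 ⟨k, hkn⟩
    have h2 := hdy ⟨k, hkn⟩
    rw [h1, h2, hagree ⟨k, hkn⟩ hk]
  · have h1 := hz.2 j
    have h2 := hdy j
    rw [h1, h2]
    exact hlt

lemma Ioc_disjoint {β : ℝ} (hβ : 1 < β) {n : ℕ} {w1 w2 : Fin n → ℕ}
    (h1 : w1 ∈ admissibleWords β n) (h2 : w2 ∈ admissibleWords β n)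
    (hne : w1 ≠ w2) :
    Disjoint (Set.Ioc (Vw β w1) (sSup (cylinder β w1)))
      (Set.Ioc (Vw β w2) (sSup (cylinder β w2))) := by
  classical
  have hex : ∃ k : ℕ, ∃ h : k < n, w1 ⟨k, h⟩ ≠ w2 ⟨k, h⟩ := by
    obtain ⟨i, hi⟩ := Function.ne_iff.1 hne
    exact ⟨i, i.isLt, by simpa using hi⟩
  let j := Nat.find hex
  obtain ⟨hjn, hjne⟩ := Nat.find_spec hex
  have hagree : ∀ k : ℕ, k < j → ∀ h : k < n, w1 ⟨k, h⟩ = w2 ⟨k, h⟩ := by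
    intro k hk h
    have := Nat.find_min hex hk
    push_neg at this
    exact this h
  -- wlog via cases
  have key : ∀ (u v : Fin n → ℕ), u ∈ admissibleWords β n → v ∈ admissibleWords β n →
      (∀ h : (j:ℕ) < n, u ⟨j, h⟩ < v ⟨j, h⟩) →
      (∀ k : Fin n, (k:ℕ) < j → u k = v k) →
      Disjoint (Set.Ioc (Vw β u) (sSup (cylinder β u)))
        (Set.Ioc (Vw β v) (sSup (cylinder β v))) := by
    intro u v hu hv hlt hag
    have hsup : sSup (cylinder β u) ≤ Vw β v := by
      apply csSup_le (cyl_nonempty hu)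
      intro z hz
      exact (cyl_lt_Vw hβ hv (j := ⟨j, hjn⟩) hag (hlt hjn) hz).le
    rw [Set.disjoint_left]
    rintro a ⟨_, ha2⟩ ⟨ha3, _⟩
    exact absurd (lt_of_le_of_lt (le_trans ha2 hsup) ha3) (lt_irrefl a)
  rcases lt_or_gt_of_ne hjne with h | h
  · exact key w1 w2 h1 h2 (fun _ => h) (fun k hk => hagree k hk k.isLt)
  · exact (key w2 w1 h2 h1 (fun _ => h) (fun k hk => (hagree k hk k.isLt).symm)).symm

lemma sum_ell {β : ℝ} (hβ : 1 < β) {n : ℕ} (F : Finset (Fin n → ℕ))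
    (hF : ∀ w ∈ F, w ∈ admissibleWords β n) :
    ∑ w ∈ F, (sSup (cylinder β w) - Vw β w) ≤ 1 := by
  have hβ0 : (0:ℝ) < β := lt_trans one_pos hβ
  have hnn : ∀ w ∈ F, 0 ≤ sSup (cylinder β w) - Vw β w := by
    intro w hw
    have := Vw_le_sSup hβ (hF w hw)
    linarith
  have hdisj : (F : Set (Fin n → ℕ)).PairwiseDisjoint
      (fun w => Set.Ioc (Vw β w) (sSup (cylinder β w))) := by
    intro w1 hw1 w2 hw2 hne
    exact Ioc_disjoint hβ (hF w1 hw1) (hF w2 hw2) hne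
  have hmeas := measure_biUnion_finset (μ := volume) hdisj
    (fun w _ => measurableSet_Ioc)
  have hsub : (⋃ w ∈ F, Set.Ioc (Vw β w) (sSup (cylinder β w))) ⊆ Set.Icc (0:ℝ) 1 := by
    intro a ha
    simp only [Set.mem_iUnion] at ha
    obtain ⟨w, hw, ha1, ha2⟩ := ha
    constructor
    · exact le_trans (Vw_nonneg hβ0 w) ha1.le
    · exact le_trans ha2 (sSup_le_one (hF w hw))
  have hle : volume (⋃ w ∈ F, Set.Ioc (Vw β w) (sSup (cylinder β w)))
      ≤ volume (Set.Icc (0:ℝ) 1) := measure_mono hsub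
  rw [hmeas] at hle
  have hIcc : volume (Set.Icc (0:ℝ) 1) = ENNReal.ofReal 1 := by
    rw [Real.volume_Icc]; norm_num
  have hsum : ∑ w ∈ F, volume (Set.Ioc (Vw β w) (sSup (cylinder β w)))
      = ENNReal.ofReal (∑ w ∈ F, (sSup (cylinder β w) - Vw β w)) := by
    rw [ENNReal.ofReal_sum_of_nonneg hnn]
    exact Finset.sum_congr rfl (fun w _ => Real.volume_Ioc)
  rw [hsum, hIcc] at hle
  exact (ENNReal.ofReal_le_ofReal_iff (by norm_num)).1 hle

lemma lower_bound {β : ℝ} (hβ : 1 < β) {n : ℕ} (F : Finset (Fin n → ℕ))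
    (hF : ∀ w, w ∈ F ↔ w ∈ admissibleWords β n) :
    β ^ n ≤ (F.card : ℝ) := by
  have hβ0 : (0:ℝ) < β := lt_trans one_pos hβ
  have hpow : (0:ℝ) < β ^ n := by positivity
  have hcover : Set.Ico (0:ℝ) 1 ⊆ ⋃ w ∈ F, Set.Icc (Vw β w) (Vw β w + 1 / β ^ n) := by
    intro x hx
    have hw : (fun i : Fin n => betaDigit β x i) ∈ F :=
      (hF _).2 ⟨x, hx, fun i => rfl⟩
    simp only [Set.mem_iUnion]
    refine ⟨_, hw, ?_, ?_⟩
    · rw [Vw_eq_Aval (fun i => rfl)]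
      exact Aval_le_self hβ hx n
    · rw [Vw_eq_Aval (fun i => rfl)]
      exact (self_lt_Aval_add hβ hx n).le
  have h1 : (1 : ENNReal) = volume (Set.Ico (0:ℝ) 1) := by
    rw [Real.volume_Ico]; norm_num
  have h2 : volume (Set.Ico (0:ℝ) 1)
      ≤ ∑ w ∈ F, volume (Set.Icc (Vw β w) (Vw β w + 1 / β ^ n)) :=
    le_trans (measure_mono hcover) (measure_biUnion_finset_le F _)
  have h3 : ∑ w ∈ F, volume (Set.Icc (Vw β w) (Vw β w + 1 / β ^ n))
      = ENNReal.ofReal ((F.card : ℝ) * (1 / β ^ n)) := by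
    have : ∀ w ∈ F, volume (Set.Icc (Vw β w) (Vw β w + 1 / β ^ n))
        = ENNReal.ofReal (1 / β ^ n) := by
      intro w _
      rw [Real.volume_Icc]
      ring_nf
    rw [Finset.sum_congr rfl this, Finset.sum_const, nsmul_eq_mul,
      ← ENNReal.ofReal_natCast, ← ENNReal.ofReal_mul (by positivity)]
  rw [← h1, h3] at h2
  have h2' : ENNReal.ofReal (1:ℝ) ≤ ENNReal.ofReal ((F.card : ℝ) * (1 / β ^ n)) := by
    rw [ENNReal.ofReal_one]; exact h2
  have h4 : (1:ℝ) ≤ (F.card : ℝ) * (1 / β ^ n) :=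
    (ENNReal.ofReal_le_ofReal_iff (by positivity)).1 h2'
  rw [mul_one_div, le_div_iff₀ hpow, one_mul] at h4
  exact h4

lemma card_step {β : ℝ} (hβ : 1 < β) {n : ℕ}
    (F : Finset (Fin n → ℕ)) (hF : ∀ w, w ∈ F ↔ w ∈ admissibleWords β n)
    (G : Finset (Fin (n+1) → ℕ)) (hG : ∀ w, w ∈ G ↔ w ∈ admissibleWords β (n+1)) :
    (G.card : ℝ) ≤ (F.card : ℝ) + β ^ (n + 1) := by
  classical
  have hβ0 : (0:ℝ) < β := lt_trans one_pos hβ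
  set p : (Fin (n+1) → ℕ) → (Fin n → ℕ) := fun w i => w i.castSucc with hp
  have hmap : ∀ w ∈ G, p w ∈ F := by
    intro w hw
    obtain ⟨x, hx, hd⟩ := (hG w).1 hw
    refine (hF _).2 ⟨x, hx, fun i => ?_⟩
    simpa using hd i.castSucc
  have hcard := Finset.card_eq_sum_card_fiberwise hmap
  -- fiber bound
  have hfib : ∀ w' ∈ F,
      (((G.filter (fun w => p w = w')).card : ℝ))
        ≤ β ^ (n+1) * (sSup (cylinder β w') - Vw β w') + 1 := by
    intro w' hw'
    set L : ℝ := β ^ (n+1) * (sSup (cylinder β w') - Vw β w') with hL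
    have hL0 : 0 ≤ L := by
      have := Vw_le_sSup hβ ((hF w').1 hw')
      have hpow : (0:ℝ) ≤ β ^ (n+1) := by positivity
      nlinarith
    set M : ℕ := (⌊L⌋).toNat with hM
    have hMle : (M : ℝ) ≤ L := by
      have h0 : (0:ℤ) ≤ ⌊L⌋ := Int.floor_nonneg.2 hL0
      have h1 : ((M:ℤ):ℝ) ≤ L := by
        rw [hM, Int.toNat_of_nonneg h0]; exact Int.floor_le L
      exact_mod_cast h1
    have hsub : ∀ w ∈ G.filter (fun w => p w = w'), w (Fin.last n) ∈ Finset.range (M+1) := by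
      intro w hw
      rw [Finset.mem_filter] at hw
      obtain ⟨hwG, hwp⟩ := hw
      obtain ⟨x, hx, hd⟩ := (hG w).1 hwG
      have hxcyl : x ∈ cylinder β w' := by
        refine ⟨hx, fun i => ?_⟩
        rw [← hwp]
        simpa using hd i.castSucc
      have hlast : betaDigit β x n = w (Fin.last n) := by
        simpa using hd (Fin.last n)
      have hb1 : (w (Fin.last n) : ℝ) ≤ β * (betaT β)^[n] x := by
        rw [← hlast]; exact digit_le hβ0 hx n
      have hiter : (betaT β)^[n] x = β ^ n * (x - Aval β x n) := by
        have h := expand hβ hx n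
        have hpow : (β:ℝ) ^ n ≠ 0 := by positivity
        field_simp at h ⊢
        linarith
      have hA : Aval β x n = Vw β w' := (Vw_eq_Aval hxcyl.2).symm
      have hxs : x ≤ sSup (cylinder β w') := le_csSup (cyl_bddAbove w') hxcyl
      have hle : (w (Fin.last n) : ℝ) ≤ L := by
        rw [hL]
        calc (w (Fin.last n) : ℝ) ≤ β * (betaT β)^[n] x := hb1
        _ = β ^ (n+1) * (x - Vw β w') := by rw [hiter, hA]; ring
        _ ≤ β ^ (n+1) * (sSup (cylinder β w') - Vw β w') := by
            apply mul_le_mul_of_nonneg_left (by linarith) (by positivity)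
      have : w (Fin.last n) ≤ M := by
        rw [hM]
        have h1 : (w (Fin.last n) : ℤ) ≤ ⌊L⌋ := Int.le_floor.2 (by exact_mod_cast hle)
        omega
      exact Finset.mem_range.2 (Nat.lt_succ_of_le this)
    have hinj : Set.InjOn (fun w : Fin (n+1) → ℕ => w (Fin.last n)) ↑(G.filter (fun w => p w = w')) := by
      intro w1 h1 w2 h2 heq
      rw [Finset.coe_filter, Set.mem_setOf_eq] at h1 h2
      funext i
      refine Fin.lastCases ?_ ?_ i
      · exact heq
      · intro i
        have := congrFun (h1.2.trans h2.2.symm) i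
        simpa [hp] using this
    have hcle : (G.filter (fun w => p w = w')).card ≤ M + 1 := by
      have := Finset.card_le_card_of_injOn _ hsub hinj
      simpa using this
    calc ((G.filter (fun w => p w = w')).card : ℝ) ≤ (M:ℝ) + 1 := by exact_mod_cast hcle
    _ ≤ L + 1 := by linarith
  have hsum : (G.card : ℝ) = ∑ w' ∈ F, ((G.filter (fun w => p w = w')).card : ℝ) := by
    rw [hcard]; push_cast; rfl
  rw [hsum]
  calc ∑ w' ∈ F, ((G.filter (fun w => p w = w')).card : ℝ)
      ≤ ∑ w' ∈ F, (β ^ (n+1) * (sSup (cylinder β w') - Vw β w') + 1) :=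
        Finset.sum_le_sum hfib
  _ = β ^ (n+1) * (∑ w' ∈ F, (sSup (cylinder β w') - Vw β w')) + F.card := by
      rw [Finset.sum_add_distrib, Finset.sum_const, ← Finset.mul_sum]
      simp
  _ ≤ β ^ (n+1) * 1 + F.card := by
      have := sum_ell hβ F (fun w hw => (hF w).1 hw)
      have hpow : (0:ℝ) ≤ β ^ (n+1) := by positivity
      nlinarith
  _ = (F.card : ℝ) + β ^ (n+1) := by ring

lemma card_le_geom {β : ℝ} (hβ : 1 < β) (n : ℕ) :
    (((adm_finite (lt_trans one_pos hβ) n).toFinset.card : ℝ))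
      ≤ ∑ k ∈ Finset.range (n+1), β ^ k := by
  induction n with
  | zero =>
    have h1 : (adm_finite (lt_trans one_pos hβ) 0).toFinset.card ≤ 1 :=
      Finset.card_le_one.2 (fun a _ b _ => Subsingleton.elim a b)
    calc ((adm_finite (lt_trans one_pos hβ) 0).toFinset.card : ℝ) ≤ 1 := by exact_mod_cast h1
    _ = ∑ k ∈ Finset.range 1, β ^ k := by simp
  | succ m ih =>
    have hstep := card_step hβ
      ((adm_finite (lt_trans one_pos hβ) m).toFinset)
      (fun w => Set.Finite.mem_toFinset _)
      ((adm_finite (lt_trans one_pos hβ) (m+1)).toFinset)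
      (fun w => Set.Finite.mem_toFinset _)
    calc ((adm_finite (lt_trans one_pos hβ) (m+1)).toFinset.card : ℝ)
        ≤ ((adm_finite (lt_trans one_pos hβ) m).toFinset.card : ℝ) + β ^ (m+1) := hstep
    _ ≤ (∑ k ∈ Finset.range (m+1), β ^ k) + β ^ (m+1) := by linarith
    _ = ∑ k ∈ Finset.range (m+2), β ^ k := (Finset.sum_range_succ _ _).symm

/-- Rényi's bound: `β^n ≤ card Σ_β^n ≤ β^{n+1}/(β-1)`. -/
theorem stmt0 (β : ℝ) (hβ : 1 < β) (n : ℕ) (hn : 1 ≤ n) :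
    β ^ n ≤ (Nat.card ↥(admissibleWords β n) : ℝ) ∧
    (Nat.card ↥(admissibleWords β n) : ℝ) ≤ β ^ (n + 1) / (β - 1) := by
  have hβ0 : (0:ℝ) < β := lt_trans one_pos hβ
  have hfin := adm_finite hβ0 n
  have hcardeq : Nat.card ↥(admissibleWords β n) = hfin.toFinset.card := by
    rw [Nat.card_coe_set_eq, Set.ncard_eq_toFinset_card _ hfin]
  rw [hcardeq]
  constructor
  · exact lower_bound hβ hfin.toFinset (fun w => Set.Finite.mem_toFinset _)
  · have h1 := card_le_geom hβ n
    have h2 : ∑ k ∈ Finset.range (n+1), β ^ k = (β ^ (n+1) - 1) / (β - 1) :=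
      geom_sum_eq (ne_of_gt hβ) (n+1)
    have h3 : (β ^ (n+1) - 1) / (β - 1) ≤ β ^ (n+1) / (β - 1) := by
      apply div_le_div_of_nonneg_right ?_ (by linarith)
      · linarith
    linarith
end

section
/- For any real number β > 1, the limit lim_{n→∞} (log card(Σ_β^n))/n exists and equals log β. -/
open Filter MeasureTheory Set

/-!
If `x ∈ [0, 1)` has first digits `w = w₀ ⋯ wₙ₋₁`, then
`x = ∑ wᵢ β^{-(i+1)} + T_β^n x / β^n`, so the cylinder of `w` lies in an interval of length
`β^{-n}` starting at the value of `w`; as the cylinders cover `[0, 1)`, there are at least `β^n`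
of them. Conversely, call `w` full if its cylinder is that whole interval. Full cylinders of length
`n` are disjoint, so there are at most `⌈β^n⌉` full words. Cylinders are intervals closed at their
left endpoint, so among the admissible one-letter extensions `w d` of a word only the one with
the largest `d` can fail to be full. Hence `#Σ_β^{n+1} ≤ #Σ_β^n + ⌈β^{n+1}⌉`, which gives
`β^n ≤ #Σ_β^n ≤ 2 (n + 1) β^n`, and the limit follows.
-/

section BetaExpansion

variable {β x y : ℝ} {n : ℕ} {w : Fin n → ℕ}

lemma betaT_iterate_mem_Ico (hx : x ∈ Ico (0:ℝ) 1) : ∀ k, (betaT β)^[k] x ∈ Ico (0:ℝ) 1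
  | 0 => hx
  | k + 1 => by
    rw [Function.iterate_succ_apply']
    exact ⟨Int.fract_nonneg _, Int.fract_lt_one _⟩

lemma betaDigit_eq_floor (k : ℕ) : betaDigit β x k = ⌊β * (betaT β)^[k] x⌋₊ :=
  Int.floor_toNat _

lemma betaT_iterate_succ (hβ : 0 ≤ β) (hx : x ∈ Ico (0:ℝ) 1) (k : ℕ) :
    (betaT β)^[k + 1] x = β * (betaT β)^[k] x - betaDigit β x k := by
  rw [Function.iterate_succ_apply', betaT, Int.fract, betaDigit_eq_floor,
    ← Int.natCast_floor_eq_floor (mul_nonneg hβ (betaT_iterate_mem_Ico hx k).1), Int.cast_natCast]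

lemma admissibleWords_finite (hβ : 0 ≤ β) (n : ℕ) : (admissibleWords β n).Finite := by
  refine (Set.Finite.pi fun _ : Fin n => Set.finite_Iic ⌊β⌋₊).subset ?_
  rintro w ⟨x, hx, hw⟩ i -
  rw [← hw i, betaDigit_eq_floor]
  exact Nat.floor_le_floor (mul_le_of_le_one_right hβ (betaT_iterate_mem_Ico hx i).2.le)

lemma eq_of_mem_cylinder {w' : Fin n → ℕ} (hx : x ∈ cylinder β w) (hx' : x ∈ cylinder β w') :
    w = w' :=
  funext fun i => (hx.2 i).symm.trans (hx'.2 i)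

lemma mem_cylinder_snoc {d : ℕ} :
    x ∈ cylinder β (Fin.snoc w d : Fin (n + 1) → ℕ) ↔ x ∈ cylinder β w ∧ betaDigit β x n = d := by
  simp only [_root_.cylinder, mem_ofPred_eq, Fin.forall_fin_succ', Fin.snoc_castSucc,
    Fin.snoc_last, Fin.val_castSucc, Fin.val_last, and_assoc]

lemma mem_cylinder_init {w : Fin (n + 1) → ℕ} (hx : x ∈ cylinder β w) :
    x ∈ cylinder β (Fin.init w) :=
  ⟨hx.1, fun i => hx.2 i.castSucc⟩

noncomputable def wordValue (β : ℝ) {n : ℕ} (w : Fin n → ℕ) : ℝ :=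
  ∑ i : Fin n, (w i : ℝ) / β ^ ((i : ℕ) + 1)

lemma wordValue_snoc (d : ℕ) :
    wordValue β (Fin.snoc w d : Fin (n + 1) → ℕ) = wordValue β w + d / β ^ (n + 1) := by
  simp [wordValue, Fin.sum_univ_castSucc]

lemma wordValue_nonneg (hβ : 0 ≤ β) (w : Fin n → ℕ) : 0 ≤ wordValue β w :=
  Finset.sum_nonneg fun _ _ => by positivity

lemma betaT_iterate_of_mem_cylinder (hβ : 0 < β) (hx : x ∈ cylinder β w) :
    (betaT β)^[n] x = β ^ n * (x - wordValue β w) := by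
  induction w using Fin.snocInduction with
  | elim0 => simp [wordValue]
  | snoc w d ih =>
    obtain ⟨hxw, hd⟩ := mem_cylinder_snoc.1 hx
    rw [betaT_iterate_succ hβ.le hx.1, ih hxw, hd, wordValue_snoc]
    field_simp
    ring

lemma cylinder_subset_Ico (hβ : 0 < β) :
    cylinder β w ⊆ Ico (wordValue β w) (wordValue β w + (β ^ n)⁻¹) := by
  intro x hx
  have hT := betaT_iterate_mem_Ico (β := β) hx.1 n
  rw [betaT_iterate_of_mem_cylinder hβ hx] at hT
  have hβn : 0 < β ^ n := pow_pos hβ n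
  constructor
  · nlinarith [hT.1]
  · rw [← sub_lt_iff_lt_add', ← one_div, lt_div_iff₀' hβn]
    exact hT.2

lemma abs_sub_lt_of_mem_cylinder (hβ : 0 < β) (hx : x ∈ cylinder β w) (hy : y ∈ cylinder β w) :
    |x - y| < (β ^ n)⁻¹ := by
  have hx := cylinder_subset_Ico hβ hx
  have hy := cylinder_subset_Ico hβ hy
  rw [abs_sub_lt_iff]
  constructor <;> linarith [hx.1, hx.2, hy.1, hy.2]

lemma cylinder_snoc (hβ : 0 < β) (d : ℕ) :
    cylinder β (Fin.snoc w d : Fin (n + 1) → ℕ) = cylinder β w ∩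
      Ico (wordValue β (Fin.snoc w d : Fin (n + 1) → ℕ))
        (wordValue β (Fin.snoc w d : Fin (n + 1) → ℕ) + (β ^ (n + 1))⁻¹) := by
  ext x
  rw [mem_cylinder_snoc, mem_inter_iff]
  refine and_congr_right fun hx => ?_
  have hβn : 0 < β ^ (n + 1) := pow_pos hβ _
  have hxv := sub_nonneg.2 (cylinder_subset_Ico hβ hx).1
  rw [betaDigit_eq_floor, betaT_iterate_of_mem_cylinder hβ hx, ← mul_assoc, ← pow_succ',
    Nat.floor_eq_iff (by positivity), wordValue_snoc, mem_Ico, ← le_sub_iff_add_le',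
    div_le_iff₀' hβn, add_assoc, ← one_div, ← add_div, ← sub_lt_iff_lt_add' (a := x),
    lt_div_iff₀' hβn]

lemma mem_cylinder_of_le (hβ : 0 < β) (hx : x ∈ cylinder β w) (hy : wordValue β w ≤ y)
    (hyx : y ≤ x) : y ∈ cylinder β w := by
  induction w using Fin.snocInduction generalizing x with
  | elim0 =>
    refine ⟨⟨?_, hyx.trans_lt hx.1.2⟩, fun i => i.elim0⟩
    simpa [wordValue] using hy
  | snoc w d ih =>
    rw [cylinder_snoc hβ] at hx ⊢
    have hwy : wordValue β w ≤ y := by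
      refine le_trans ?_ hy
      rw [wordValue_snoc]
      exact le_add_of_nonneg_right (by positivity)
    exact ⟨ih hx.1 hwy hyx, hy, hyx.trans_lt hx.2.2⟩

/-- The cylinder of `w` is always contained in `[wordValue β w, wordValue β w + β⁻ⁿ)`; `w` is full
when it fills that interval, i.e. when `T_β^n` maps the cylinder onto `[0, 1)`. -/
def IsFull (β : ℝ) {n : ℕ} (w : Fin n → ℕ) : Prop :=
  Ico (wordValue β w) (wordValue β w + (β ^ n)⁻¹) ⊆ cylinder β w

lemma IsFull.wordValue_mem (hβ : 0 < β) (hw : IsFull β w) : wordValue β w ∈ cylinder β w :=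
  hw ⟨le_rfl, lt_add_of_pos_right _ (by positivity)⟩

lemma IsFull.eq_of_wordValue_mem_Ico (hβ : 0 < β) {w' : Fin n → ℕ} (hw : IsFull β w)
    (hw' : IsFull β w') (h : wordValue β w' ∈ Ico (wordValue β w) (wordValue β w + (β ^ n)⁻¹)) :
    w = w' :=
  eq_of_mem_cylinder (hw h) (hw'.wordValue_mem hβ)

lemma ncard_setOf_isFull_le (hβ : 0 < β) (n : ℕ) :
    {w : Fin n → ℕ | IsFull β w}.ncard ≤ ⌈β ^ n⌉₊ := by
  have hβn : 0 < β ^ n := pow_pos hβ n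
  have hfloor_mem (w : Fin n → ℕ) (hw : IsFull β w) :
      ⌊β ^ n * wordValue β w⌋₊ ∈ (Finset.range ⌈β ^ n⌉₊ : Set ℕ) := by
    have hv := (hw.wordValue_mem hβ).1.2
    rw [Finset.coe_range, mem_Iio, Nat.floor_lt (mul_nonneg hβn.le (wordValue_nonneg hβ.le w))]
    calc β ^ n * wordValue β w < β ^ n := mul_lt_of_lt_one_right hβn hv
      _ ≤ ⌈β ^ n⌉₊ := Nat.le_ceil _
  have hinj : InjOn (fun w => ⌊β ^ n * wordValue β w⌋₊) {w : Fin n → ℕ | IsFull β w} := by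
    intro w hw w' hw' h
    wlog hle : wordValue β w ≤ wordValue β w' generalizing w w'
    · exact (this hw' hw h.symm (le_of_not_ge hle)).symm
    refine hw.eq_of_wordValue_mem_Ico hβ hw' ⟨hle, ?_⟩
    have h1 := Nat.floor_le (mul_nonneg hβn.le (wordValue_nonneg hβ.le w))
    have h2 := Nat.lt_floor_add_one (β ^ n * wordValue β w')
    simp only at h
    rw [← h] at h2
    rw [← sub_lt_iff_lt_add', ← one_div, lt_div_iff₀' hβn]
    linarith
  exact (Set.ncard_le_ncard_of_injOn _ hfloor_mem hinj).trans_eq (by simp)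

/-- The cylinder of `w d'` lies to the right of the whole interval of `w d`, and cylinders are
closed downwards to their left endpoint. -/
lemma isFull_snoc_of_lt (hβ : 0 < β) {d d' : ℕ} (hdd' : d < d')
    (hne : (cylinder β (Fin.snoc w d' : Fin (n + 1) → ℕ)).Nonempty) :
    IsFull β (Fin.snoc w d : Fin (n + 1) → ℕ) := by
  obtain ⟨x, hx⟩ := hne
  intro y hy
  rw [cylinder_snoc hβ] at hx ⊢
  refine ⟨mem_cylinder_of_le hβ hx.1 (le_trans ?_ hy.1) (hy.2.le.trans ?_), hy⟩
  · rw [wordValue_snoc]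
    exact le_add_of_nonneg_right (by positivity)
  · refine le_trans ?_ hx.2.1
    rw [wordValue_snoc, wordValue_snoc, add_assoc, ← one_div, ← add_div]
    gcongr
    exact_mod_cast hdd'

lemma eq_of_not_isFull_snoc (hβ : 0 < β) {d d' : ℕ}
    (hd : (cylinder β (Fin.snoc w d : Fin (n + 1) → ℕ)).Nonempty)
    (hd' : (cylinder β (Fin.snoc w d' : Fin (n + 1) → ℕ)).Nonempty)
    (hdf : ¬IsFull β (Fin.snoc w d : Fin (n + 1) → ℕ))
    (hdf' : ¬IsFull β (Fin.snoc w d' : Fin (n + 1) → ℕ)) : d = d' :=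
  le_antisymm (not_lt.1 fun h => hdf' (isFull_snoc_of_lt hβ h hd))
    (not_lt.1 fun h => hdf (isFull_snoc_of_lt hβ h hd'))

lemma injOn_init_not_isFull (hβ : 0 < β) (n : ℕ) :
    InjOn Fin.init (admissibleWords β (n + 1) \ {w | IsFull β w}) := by
  intro u ⟨hu, huf⟩ u' ⟨hu', huf'⟩ h
  rw [← Fin.snoc_init_self u, h] at hu huf
  rw [← Fin.snoc_init_self u'] at hu' huf'
  calc u = Fin.snoc (Fin.init u) (u (Fin.last n)) := (Fin.snoc_init_self u).symm
    _ = Fin.snoc (Fin.init u') (u' (Fin.last n)) := by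
      rw [h, eq_of_not_isFull_snoc hβ hu hu' huf huf']
    _ = u' := Fin.snoc_init_self u'

lemma ncard_admissibleWords_succ_le (hβ : 0 < β) (n : ℕ) :
    (admissibleWords β (n + 1)).ncard ≤
      (admissibleWords β n).ncard + {w : Fin (n + 1) → ℕ | IsFull β w}.ncard := by
  have hfull : {w : Fin (n + 1) → ℕ | IsFull β w} ⊆ admissibleWords β (n + 1) :=
    fun w hw => ⟨_, hw.wordValue_mem hβ⟩
  have hinit : (admissibleWords β (n + 1) \ {w | IsFull β w}).ncard ≤
      (admissibleWords β n).ncard :=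
    Set.ncard_le_ncard_of_injOn Fin.init
      (fun _ hu => let ⟨x, hx⟩ := hu.1; ⟨x, mem_cylinder_init hx⟩)
      (injOn_init_not_isFull hβ n) (admissibleWords_finite hβ.le n)
  calc (admissibleWords β (n + 1)).ncard
      = ({w | IsFull β w} ∪ admissibleWords β (n + 1) \ {w | IsFull β w}).ncard := by
        rw [union_sdiff_cancel hfull]
    _ ≤ _ := Set.ncard_union_le _ _
    _ ≤ _ := by rw [add_comm]; gcongr

lemma ncard_admissibleWords_le (hβ : 0 < β) (n : ℕ) :
    (admissibleWords β n).ncard ≤ ∑ k ∈ Finset.range (n + 1), ⌈β ^ k⌉₊ := by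
  induction n with
  | zero => simpa using Set.ncard_le_one_of_subsingleton (admissibleWords β 0)
  | succ n ih =>
    rw [Finset.sum_range_succ]
    linarith [ncard_admissibleWords_succ_le hβ n, ncard_setOf_isFull_le hβ (n + 1)]

lemma ncard_admissibleWords_le_mul_pow (hβ : 1 ≤ β) (n : ℕ) :
    ((admissibleWords β n).ncard : ℝ) ≤ 2 * (n + 1) * β ^ n := by
  have hβn : 1 ≤ β ^ n := one_le_pow₀ hβ
  calc ((admissibleWords β n).ncard : ℝ) ≤ ∑ k ∈ Finset.range (n + 1), (⌈β ^ k⌉₊ : ℝ) := by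
        exact_mod_cast ncard_admissibleWords_le (by linarith) n
    _ ≤ ∑ k ∈ Finset.range (n + 1), 2 * β ^ n := by
        refine Finset.sum_le_sum fun k hk => ?_
        have hkn : β ^ k ≤ β ^ n :=
          pow_le_pow_right₀ hβ (Nat.lt_succ_iff.1 (Finset.mem_range.1 hk))
        linarith [Nat.ceil_lt_add_one (zero_le_one.trans (one_le_pow₀ hβ : 1 ≤ β ^ k))]
    _ = 2 * (n + 1) * β ^ n := by
        simp only [Finset.sum_const, Finset.card_range, nsmul_eq_mul, Nat.cast_add, Nat.cast_one]
        ring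

lemma pow_le_ncard_admissibleWords (hβ : 0 < β) (n : ℕ) :
    β ^ n ≤ (admissibleWords β n).ncard := by
  have hβn : 0 < β ^ n := pow_pos hβ n
  set f : ℕ → Fin n → ℕ := fun j i => betaDigit β (j / β ^ n) i
  have hmem (j : ℕ) (hj : j ∈ (Finset.range ⌈β ^ n⌉₊ : Set ℕ)) :
      j / β ^ n ∈ cylinder β (f j) := by
    rw [Finset.coe_range, mem_Iio, Nat.lt_ceil] at hj
    exact ⟨⟨by positivity, (div_lt_one hβn).2 hj⟩, fun _ => rfl⟩
  have hinj : InjOn f (Finset.range ⌈β ^ n⌉₊ : Set ℕ) := by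
    intro j hj j' hj' h
    have hjj' := abs_sub_lt_of_mem_cylinder hβ (hmem j hj) (h ▸ hmem j' hj')
    rw [← sub_div, abs_div, abs_of_pos hβn, ← one_div, div_lt_div_iff_of_pos_right hβn,
      abs_sub_lt_iff] at hjj'
    have h1 : j < j' + 1 := by exact_mod_cast sub_lt_iff_lt_add'.1 hjj'.1
    have h2 : j' < j + 1 := by exact_mod_cast sub_lt_iff_lt_add'.1 hjj'.2
    omega
  calc β ^ n ≤ ⌈β ^ n⌉₊ := Nat.le_ceil _
    _ ≤ (admissibleWords β n).ncard := by
      exact_mod_cast (Set.ncard_le_ncard_of_injOn f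
        (fun j hj => (⟨_, hmem j hj⟩ : f j ∈ admissibleWords β n)) hinj
        (admissibleWords_finite hβ.le n)).trans_eq' (by simp)

lemma tendsto_log_div_of_pow_le_of_le_mul_pow {u : ℕ → ℝ} {a C : ℝ} (ha : 0 < a) (hC : 0 < C)
    (hlow : ∀ n, a ^ n ≤ u n) (hup : ∀ n, u n ≤ C * (n + 1) * a ^ n) :
    Tendsto (fun n => Real.log (u n) / n) atTop (nhds (Real.log a)) := by
  have herr : Tendsto (fun n : ℕ => Real.log (C * (n + 1)) / n) atTop (nhds 0) := by
    have hlin : Tendsto (fun n : ℕ => C * ((n : ℝ) + 1)) atTop atTop :=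
      (tendsto_atTop_add_const_right _ 1 tendsto_natCast_atTop_atTop).const_mul_atTop hC
    refine ((Real.tendsto_pow_log_div_mul_add_atTop C⁻¹ (-1) 1 (inv_ne_zero hC.ne')).comp
      hlin).congr fun n => ?_
    simp only [Function.comp_apply, pow_one]
    field_simp
    ring
  have hlower : ∀ᶠ n : ℕ in atTop, Real.log a ≤ Real.log (u n) / n := by
    filter_upwards [eventually_gt_atTop 0] with n hn
    rw [le_div_iff₀ (Nat.cast_pos.2 hn), mul_comm, ← Real.log_pow]
    exact Real.log_le_log (pow_pos ha n) (hlow n)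
  have hupper : ∀ᶠ n : ℕ in atTop,
      Real.log (u n) / n ≤ Real.log a + Real.log (C * (n + 1)) / n := by
    filter_upwards [eventually_gt_atTop 0] with n hn
    have hn' : (0 : ℝ) < n := Nat.cast_pos.2 hn
    rw [div_le_iff₀ hn', add_mul, div_mul_cancel₀ _ hn'.ne', mul_comm, ← Real.log_pow,
      add_comm, ← Real.log_mul (by positivity) (by positivity)]
    exact Real.log_le_log ((pow_pos ha n).trans_le (hlow n)) (hup n)
  exact tendsto_of_tendsto_of_tendsto_of_le_of_le' tendsto_const_nhds
    (by simpa using herr.const_add (Real.log a)) hlower hupper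

end BetaExpansion

/-- The topological entropy of `(I, T_β)`:
`lim_{n→∞} (log card Σ_β^n)/n = log β`. -/
theorem stmt1 (β : ℝ) (hβ : 1 < β) :
    Tendsto (fun n : ℕ => Real.log (Nat.card ↥(admissibleWords β n)) / n)
      atTop (nhds (Real.log β)) := by
  simp only [Nat.card_coe_set_eq]
  exact tendsto_log_div_of_pow_le_of_le_mul_pow (by linarith) two_pos
    (pow_le_ncard_admissibleWords (by linarith)) (ncard_admissibleWords_le_mul_pow hβ.le)
end

section
/- If a sequence {θ(n)} of positive reals is slowly varying, then lim_{n→∞} (log θ(n))/(log n) = 0. -/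
/-!
Telescoping, `log f(n) - log f(0)` is the sum of the increments `-log (f(i) / f(i+1))`.
Since `1 - 1/r ≤ log r ≤ r - 1`, the hypothesis `(i+1)(1 - f(i)/f(i+1)) → 0` makes these
increments `o(1/(i+1))`, so their sum is `o(∑_{i<n} 1/(i+1)) = o(log n)`. Finally
`log θ(n) = log (θ(n)/f(n)) + log f(n)`, where `log (θ(n)/f(n)) → log K` is bounded.
-/

open Filter

/-- A sequence `{θ(n)}` of positive reals is slowly varying if there is a
sequence of positive reals `{f(n)}` with `θ(n)/f(n) → K > 0` and
`n(1 - f(n-1)/f(n)) → 0`. -/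
def SlowlyVarying (θ : ℕ → ℝ) : Prop :=
  (∀ n, 1 ≤ n → 0 < θ n) ∧
  ∃ f : ℕ → ℝ, (∀ n, 1 ≤ n → 0 < f n) ∧
    (∃ K : ℝ, 0 < K ∧ Tendsto (fun n => θ n / f n) atTop (nhds K)) ∧
    Tendsto (fun n : ℕ => (n : ℝ) * (1 - f (n - 1) / f n)) atTop (nhds 0)

open Topology Asymptotics Finset

theorem tendsto_mul_log_of_tendsto_mul_one_sub {α : Type*} {l : Filter α} {c r : α → ℝ}
    (hc : Tendsto c l atTop) (hr : ∀ᶠ x in l, 0 < r x)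
    (h : Tendsto (fun x => c x * (1 - r x)) l (𝓝 0)) :
    Tendsto (fun x => c x * Real.log (r x)) l (𝓝 0) := by
  have hr_one : Tendsto r l (𝓝 1) := by
    have hsub : Tendsto (fun x => 1 - r x) l (𝓝 0) :=
      (h.div_atTop hc).congr' <| (hc.eventually_gt_atTop 0).mono fun x hx => by
        field_simp
    simpa using hsub.const_sub 1
  have hlower : Tendsto (fun x => -(c x * (1 - r x)) / r x) l (𝓝 0) := by
    simpa only [neg_zero, zero_div, Pi.div_def] using h.neg.div hr_one one_ne_zero
  refine tendsto_of_tendsto_of_tendsto_of_le_of_le' hlower (by simpa using h.neg) ?_ ?_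
  · filter_upwards [hr, hc.eventually_ge_atTop 0] with x hrx hcx
    have := Real.one_sub_inv_le_log_of_pos hrx
    rw [neg_div, mul_div_assoc, ← neg_mul]
    calc -c x * ((1 - r x) / r x) = c x * (1 - (r x)⁻¹) := by field_simp; ring
      _ ≤ c x * Real.log (r x) := mul_le_mul_of_nonneg_left this hcx
  · filter_upwards [hr, hc.eventually_ge_atTop 0] with x hrx hcx
    have := Real.log_le_sub_one_of_pos hrx
    calc c x * Real.log (r x) ≤ c x * (r x - 1) := mul_le_mul_of_nonneg_left this hcx
      _ = -(c x * (1 - r x)) := by ring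

theorem isLittleO_log_natCast_of_tendsto {a : ℕ → ℝ} {L : ℝ} (h : Tendsto a atTop (𝓝 L)) :
    a =o[atTop] fun n => Real.log n :=
  (h.isBigO_one ℝ).trans_isLittleO <| (isLittleO_one_left_iff ℝ).2 <|
    tendsto_norm_atTop_atTop.comp (Real.tendsto_log_atTop.comp tendsto_natCast_atTop_atTop)

theorem isLittleO_log_of_tendsto_mul_sub {a : ℕ → ℝ}
    (h : Tendsto (fun n : ℕ => ((n : ℝ) + 1) * (a (n + 1) - a n)) atTop (𝓝 0)) :
    a =o[atTop] fun n => Real.log n := by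
  have hinc : (fun n => a (n + 1) - a n) =o[atTop] fun n : ℕ => 1 / ((n : ℝ) + 1) := by
    rw [isLittleO_iff_tendsto fun n hn => absurd hn (by positivity)]
    simpa [div_div_eq_mul_div, mul_comm] using h
  have hharmonic : (fun n => ∑ i ∈ range n, 1 / ((i : ℝ) + 1)) =O[atTop]
      fun n => Real.log n := by
    refine IsBigO.of_bound 2 ?_
    filter_upwards [eventually_ge_atTop 3] with n hn
    have hlog : 1 ≤ Real.log n := by
      rw [Real.le_log_iff_exp_le (by positivity)]
      exact Real.exp_one_lt_three.le.trans (by exact_mod_cast hn)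
    have hsum : ∑ i ∈ range n, 1 / ((i : ℝ) + 1) = harmonic n := by
      simp [harmonic]
    rw [Real.norm_of_nonneg (by positivity), Real.norm_of_nonneg (by linarith), hsum]
    linarith [harmonic_le_one_add_log n]
  have htelescope : (fun n => a n - a 0) =o[atTop] fun n => Real.log n :=
    ((hinc.sum_range (fun n => by positivity) Real.tendsto_sum_range_one_div_nat_succ_atTop
      ).trans_isBigO hharmonic).congr_left fun n => sum_range_sub a n
  simpa using htelescope.add (isLittleO_log_natCast_of_tendsto (tendsto_const_nhds (x := a 0)))

/-- If `{θ(n)}` is slowly varying, then `log θ(n) / log n → 0`. -/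
theorem stmt2 (θ : ℕ → ℝ) (hθ : SlowlyVarying θ) :
    Tendsto (fun n : ℕ => Real.log (θ n) / Real.log n) atTop (nhds 0) := by
  obtain ⟨hθ_pos, f, hf_pos, ⟨K, hK, hθf⟩, hf⟩ := hθ
  have hratio : Tendsto (fun n : ℕ => ((n : ℝ) + 1) * (1 - f n / f (n + 1))) atTop (𝓝 0) :=
    (hf.comp (tendsto_add_atTop_nat 1)).congr fun n => by simp
  have hlog_ratio := tendsto_mul_log_of_tendsto_mul_one_sub
    (tendsto_atTop_add_const_right _ 1 tendsto_natCast_atTop_atTop)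
    (eventually_ge_atTop 1 |>.mono fun n hn => div_pos (hf_pos n hn) (hf_pos _ (by omega)))
    hratio
  have hlog_f : (fun n => Real.log (f n)) =o[atTop] fun n => Real.log n := by
    refine isLittleO_log_of_tendsto_mul_sub ?_
    rw [← neg_zero]
    refine hlog_ratio.neg.congr' ?_
    filter_upwards [eventually_ge_atTop 1] with n hn
    rw [Real.log_div (hf_pos n hn).ne' (hf_pos _ (by omega)).ne']
    ring
  have hlog_θf : (fun n => Real.log (θ n / f n)) =o[atTop] fun n => Real.log n :=
    isLittleO_log_natCast_of_tendsto ((Real.continuousAt_log hK.ne').tendsto.comp hθf)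
  refine (hlog_θf.add hlog_f).congr' ?_ EventuallyEq.rfl |>.tendsto_div_nhds_zero
  filter_upwards [eventually_ge_atTop 1] with n hn
  rw [Real.log_div (hθ_pos n hn).ne' (hf_pos n hn).ne', sub_add_cancel]
end

section
/- Let β > 1 and let (ε_1,…,ε_n) and (η_1,…,η_m) be β-admissible words whose cylinders are both full (have length exactly β^{-n} and β^{-m} respectively). Then the concatenated word (ε_1,…,ε_n,η_1,…,η_m) is β-admissible and its cylinder is full, i.e., has length exactly β^{-(n+m)}. -/
open Filter MeasureTheory Set

lemma betaT_iter_nonneg (β x : ℝ) (hx : 0 ≤ x) (k : ℕ) : 0 ≤ (betaT β)^[k] x := by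
  cases k with
  | zero => simpa using hx
  | succ k => rw [Function.iterate_succ_apply']; exact Int.fract_nonneg _

lemma betaT_iter_mem (β : ℝ) {x : ℝ} (hx : x ∈ Set.Ico (0:ℝ) 1) (k : ℕ) :
    (betaT β)^[k] x ∈ Set.Ico (0:ℝ) 1 := by
  cases k with
  | zero => simpa using hx
  | succ k =>
    rw [Function.iterate_succ_apply']
    exact ⟨Int.fract_nonneg _, Int.fract_lt_one _⟩

lemma betaDigit_cast (β x : ℝ) (hβ : 0 < β) (hx : 0 ≤ x) (k : ℕ) :
    ((betaDigit β x k : ℕ) : ℝ) = (⌊β * (betaT β)^[k] x⌋ : ℝ) := by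
  have h0 : (0:ℝ) ≤ β * (betaT β)^[k] x := mul_nonneg hβ.le (betaT_iter_nonneg β x hx k)
  rw [betaDigit]
  exact_mod_cast congrArg (fun z : ℤ => (z : ℝ))
    (Int.toNat_of_nonneg (Int.floor_nonneg.2 h0))

lemma betaT_iter_eq (β x : ℝ) (hβ : 0 < β) (hx : 0 ≤ x) (k : ℕ) :
    (betaT β)^[k] x
      = β^k * (x - ∑ i ∈ Finset.range k, (betaDigit β x i : ℝ) * (β^(i+1))⁻¹) := by
  induction k with
  | zero => simp
  | succ k ih =>
    have hβ0 : β ≠ 0 := hβ.ne'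
    have hd := betaDigit_cast β x hβ hx k
    rw [Function.iterate_succ_apply', betaT, Int.fract, ← hd, ih, Finset.sum_range_succ]
    have hpow : β ^ (k+1) ≠ 0 := pow_ne_zero _ hβ0
    field_simp
    ring

lemma betaDigit_shift (β x : ℝ) (n j : ℕ) :
    betaDigit β ((betaT β)^[n] x) j = betaDigit β x (n + j) := by
  rw [betaDigit, betaDigit, ← Function.iterate_add_apply, add_comm j n]

lemma measurable_betaDigit (β : ℝ) (k : ℕ) : Measurable fun x => betaDigit β x k := by
  have hT : Measurable (betaT β) := (measurable_const.mul measurable_id).fract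
  have hIt : Measurable fun x => (betaT β)^[k] x := hT.iterate k
  exact (measurable_of_countable Int.toNat).comp (measurable_const.mul hIt).floor

lemma measurableSet_cylinder (β : ℝ) {n : ℕ} (w : Fin n → ℕ) :
    MeasurableSet (cylinder β w) := by
  have : _root_.cylinder β w
      = Set.Ico (0:ℝ) 1 ∩ ⋂ i : Fin n, (fun x => betaDigit β x (i : ℕ)) ⁻¹' {w i} := by
    ext x
    simp only [_root_.cylinder, Set.mem_setOf_eq, Set.mem_inter_iff, Set.mem_iInter,
      Set.mem_preimage, Set.mem_singleton_iff]
  rw [this]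
  exact measurableSet_Ico.inter
    (MeasurableSet.iInter fun i => (measurable_betaDigit β i) (measurableSet_singleton _))

/-- Concatenation of two full admissible words is an admissible full word. -/
theorem stmt6 (β : ℝ) (hβ : 1 < β) {n m : ℕ} (w : Fin n → ℕ) (v : Fin m → ℕ)
    (hw : w ∈ admissibleWords β n) (hv : v ∈ admissibleWords β m)
    (hwfull : volume (cylinder β w) = ENNReal.ofReal ((β ^ n)⁻¹))
    (hvfull : volume (cylinder β v) = ENNReal.ofReal ((β ^ m)⁻¹)) :
    Fin.append w v ∈ admissibleWords β (n + m) ∧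
    volume (cylinder β (Fin.append w v)) = ENNReal.ofReal ((β ^ (n + m))⁻¹) := by
  have hβ0 : (0:ℝ) < β := lt_trans one_pos hβ
  have ha0 : (0:ℝ) < β ^ n := pow_pos hβ0 n
  set C : ℝ := ∑ i ∈ Finset.range n,
      (if h : i < n then (w ⟨i, h⟩ : ℝ) else 0) * (β^(i+1))⁻¹ with hC
  set f : ℝ → ℝ := fun x => β ^ n * (x - C) with hf
  -- On the cylinder of `w`, the n-th iterate equals `f`.
  have hiter : ∀ x ∈ cylinder β w, (betaT β)^[n] x = f x := by
    intro x hx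
    rw [betaT_iter_eq β x hβ0 hx.1.1 n, hf, hC]
    congr 2
    apply Finset.sum_congr rfl
    intro i hi
    have hi' : i < n := Finset.mem_range.mp hi
    rw [dif_pos hi', hx.2 ⟨i, hi'⟩]
  -- Cylinder of the concatenation.
  have hkey : cylinder β (Fin.append w v) = cylinder β w ∩ f ⁻¹' (cylinder β v) := by
    ext x
    constructor
    · rintro ⟨hx01, hdig⟩
      have hxw : x ∈ cylinder β w := by
        refine ⟨hx01, fun i => ?_⟩
        have := hdig (Fin.castAdd m i)
        rwa [Fin.append_left] at this
      refine ⟨hxw, ?_⟩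
      have hfx : f x = (betaT β)^[n] x := (hiter x hxw).symm
      refine ⟨by rw [hfx]; exact betaT_iter_mem β hx01 n, fun j => ?_⟩
      have h1 : betaDigit β (f x) (j : ℕ) = betaDigit β x (n + j) := by
        rw [hfx]; exact betaDigit_shift β x n j
      have h2 := hdig (Fin.natAdd n j)
      rw [Fin.append_right] at h2
      rw [h1]; exact h2
    · rintro ⟨hxw, hfv⟩
      refine ⟨hxw.1, fun i => ?_⟩
      refine Fin.addCases (fun i => ?_) (fun j => ?_) i
      · rw [Fin.append_left]
        exact hxw.2 i
      · rw [Fin.append_right]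
        have h1 : betaDigit β x ((Fin.natAdd n j : Fin (n+m)) : ℕ) = betaDigit β (f x) (j : ℕ) := by
          rw [← hiter x hxw]
          exact (betaDigit_shift β x n j).symm
        rw [h1]; exact hfv.2 j
  -- Volume of preimages under `f`.
  have hpre : ∀ s : Set ℝ, volume (f ⁻¹' s) = ENNReal.ofReal ((β ^ n)⁻¹) * volume s := by
    intro s
    have hcomp : f ⁻¹' s = (fun x => -C + x) ⁻¹' ((fun y => β ^ n * y) ⁻¹' s) := by
      ext x
      simp only [Set.mem_preimage, hf, neg_add_eq_sub]
    rw [hcomp, measure_preimage_add, Real.volume_preimage_mul_left ha0.ne' s,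
      abs_of_pos (inv_pos.2 ha0)]
  -- The cylinder of `w` fills `f ⁻¹' [0,1)` up to measure zero.
  have hsub : cylinder β w ⊆ f ⁻¹' (Set.Ico (0:ℝ) 1) := by
    intro x hx
    have := betaT_iter_mem β hx.1 n
    rwa [hiter x hx] at this
  have hIcov : volume (f ⁻¹' (Set.Ico (0:ℝ) 1)) = ENNReal.ofReal ((β ^ n)⁻¹) := by
    rw [hpre, Real.volume_Ico, sub_zero, ENNReal.ofReal_one, mul_one]
  have hnull : volume (f ⁻¹' (Set.Ico (0:ℝ) 1) \ cylinder β w) = 0 := by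
    rw [measure_diff hsub (measurableSet_cylinder β w).nullMeasurableSet
      (by rw [hwfull]; exact ENNReal.ofReal_ne_top), hIcov, hwfull, tsub_self]
  -- Main volume computation.
  have hvol : volume (cylinder β (Fin.append w v)) = ENNReal.ofReal ((β ^ (n+m))⁻¹) := by
    have hBsub : f ⁻¹' (cylinder β v) ⊆ f ⁻¹' (Set.Ico (0:ℝ) 1) := fun x hx => hx.1
    have hd0 : volume (f ⁻¹' (cylinder β v) \ cylinder β w) = 0 := by
      refine measure_mono_null (fun x hx => ?_) hnull
      exact ⟨hBsub hx.1, hx.2⟩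
    have heq : volume (cylinder β w ∩ f ⁻¹' (cylinder β v))
        = volume (f ⁻¹' (cylinder β v)) := by
      apply le_antisymm (measure_mono Set.inter_subset_right)
      calc volume (f ⁻¹' (cylinder β v))
          ≤ volume ((cylinder β w ∩ f ⁻¹' (cylinder β v))
              ∪ (f ⁻¹' (cylinder β v) \ cylinder β w)) := by
            apply measure_mono
            intro x hx
            by_cases hxA : x ∈ cylinder β w
            · exact Or.inl ⟨hxA, hx⟩
            · exact Or.inr ⟨hx, hxA⟩
        _ ≤ volume (cylinder β w ∩ f ⁻¹' (cylinder β v))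
              + volume (f ⁻¹' (cylinder β v) \ cylinder β w) := measure_union_le _ _
        _ = volume (cylinder β w ∩ f ⁻¹' (cylinder β v)) := by rw [hd0, add_zero]
    rw [hkey, heq, hpre, hvfull, ← ENNReal.ofReal_mul (inv_nonneg.2 ha0.le)]
    congr 1
    rw [pow_add, mul_inv]
  refine ⟨?_, hvol⟩
  -- Nonemptiness gives admissibility.
  have hne : (cylinder β (Fin.append w v)).Nonempty := by
    apply nonempty_of_measure_ne_zero (μ := volume)
    rw [hvol]
    simp [ENNReal.ofReal_eq_zero, not_le, inv_pos, pow_pos hβ0]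
  obtain ⟨x, hx⟩ := hne
  exact ⟨x, hx.1, hx.2⟩
end

section
/- Let β > 1 and let (ε_1,…,ε_n) be a β-admissible word. If the cylinder I_n(ε_1,…,ε_n) is full, then for any β-admissible word (η_1,…,η_m), the concatenation (ε_1,…,ε_n,η_1,…,η_m) is β-admissible and |I_{n+m}(ε_1,…,ε_n,η_1,…,η_m)| = |I_n(ε_1,…,ε_n)| · |I_m(η_1,…,η_m)|. -/
open Filter MeasureTheory Set

/-!
On the cylinder of a word `w` of length `n`, `T_β^n` is the affine map `x ↦ β^n x - p`, where
`p = ∑ w_i β^(n-1-i)`; so the cylinder is an interval contained in `[p/β^n, (p+1)/β^n)`, the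
preimage of `[0,1)` under this map. A full cylinder has the length `β^(-n)` of that interval, hence
is all of it. Then `T_β^n` maps `I_n(w)` affinely onto `[0,1)`, and `I_{n+m}(w v)` is the preimage
of `I_m(v)` under this map: it is nonempty when `I_m(v)` is, and its length is `β^(-n) |I_m(v)|`.
-/

lemma Real.preimage_mul_sub_Ico {t : ℝ} (ht : 0 < t) (c a b : ℝ) :
    (fun x => t * x - c) ⁻¹' Ico a b = Ico ((a + c) / t) ((b + c) / t) := by
  change (t * ·) ⁻¹' ((· - c) ⁻¹' Ico a b) = _
  rw [preimage_sub_const_Ico, preimage_const_mul_Ico₀ _ _ ht]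

lemma Real.volume_preimage_mul_sub {t : ℝ} (ht : 0 < t) (c : ℝ) (s : Set ℝ) :
    volume ((fun x => t * x - c) ⁻¹' s) = ENNReal.ofReal t⁻¹ * volume s := by
  simp_rw [sub_eq_add_neg]
  change volume ((t * ·) ⁻¹' ((· + -c) ⁻¹' s)) = _
  rw [Real.volume_preimage_mul_left ht.ne', measure_preimage_add_right, abs_of_pos (inv_pos.2 ht)]

namespace BetaExpansion

variable {β : ℝ}

lemma iterate_betaT_mem_Ico {x : ℝ} (hx : x ∈ Ico (0:ℝ) 1) (n : ℕ) :
    (betaT β)^[n] x ∈ Ico (0:ℝ) 1 := by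
  cases n with
  | zero => exact hx
  | succ n =>
    rw [Function.iterate_succ_apply']
    exact ⟨Int.fract_nonneg _, Int.fract_lt_one _⟩

lemma betaDigit_iterate (x : ℝ) (k j : ℕ) :
    betaDigit β ((betaT β)^[k] x) j = betaDigit β x (j + k) := by
  rw [betaDigit, betaDigit, Function.iterate_add_apply]

lemma iterate_betaT_succ (hβ : 0 ≤ β) {x : ℝ} (hx : x ∈ Ico (0:ℝ) 1) (n : ℕ) :
    (betaT β)^[n + 1] x = β * (betaT β)^[n] x - betaDigit β x n := by
  have h0 : 0 ≤ β * (betaT β)^[n] x := mul_nonneg hβ (iterate_betaT_mem_Ico hx n).1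
  rw [Function.iterate_succ_apply', betaT, betaDigit, Int.floor_toNat, ← Int.self_sub_floor,
    ← Int.natCast_floor_eq_floor h0, Int.cast_natCast]

lemma betaDigit_eq_iff (hβ : 0 ≤ β) {x : ℝ} (hx : x ∈ Ico (0:ℝ) 1) (n d : ℕ) :
    betaDigit β x n = d ↔ β * (betaT β)^[n] x - d ∈ Ico (0:ℝ) 1 := by
  have h0 : 0 ≤ β * (betaT β)^[n] x := mul_nonneg hβ (iterate_betaT_mem_Ico hx n).1
  rw [betaDigit, Int.floor_toNat, Nat.floor_eq_iff h0, mem_Ico, sub_nonneg, sub_lt_iff_lt_add']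

/-- `prefixValue β e n = ∑_{i<n} e i * β^(n-1-i)`. -/
noncomputable def prefixValue (β : ℝ) (e : ℕ → ℕ) : ℕ → ℝ
  | 0 => 0
  | k + 1 => β * prefixValue β e k + e k

def seqCylinder (β : ℝ) (e : ℕ → ℕ) (n : ℕ) : Set ℝ :=
  {x | x ∈ Ico (0:ℝ) 1 ∧ ∀ i < n, betaDigit β x i = e i}

lemma mem_seqCylinder_succ {e : ℕ → ℕ} {n : ℕ} {x : ℝ} :
    x ∈ seqCylinder β e (n + 1) ↔ x ∈ seqCylinder β e n ∧ betaDigit β x n = e n := by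
  simp only [seqCylinder, mem_ofPred_eq, Nat.forall_lt_succ_right, and_assoc]

lemma iterate_betaT_eq_of_mem_seqCylinder (hβ : 0 ≤ β) {e : ℕ → ℕ} {n : ℕ} {x : ℝ}
    (hx : x ∈ seqCylinder β e n) : (betaT β)^[n] x = β ^ n * x - prefixValue β e n := by
  induction n with
  | zero => simp [prefixValue]
  | succ n ih =>
    obtain ⟨hxn, hdigit⟩ := mem_seqCylinder_succ.1 hx
    rw [iterate_betaT_succ hβ hxn.1, ih hxn, hdigit, prefixValue, pow_succ]
    ring

lemma seqCylinder_subset_preimage (hβ : 0 ≤ β) (e : ℕ → ℕ) (n : ℕ) :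
    seqCylinder β e n ⊆ (fun x => β ^ n * x - prefixValue β e n) ⁻¹' Ico 0 1 := fun x hx => by
  rw [mem_preimage, ← iterate_betaT_eq_of_mem_seqCylinder hβ hx]
  exact iterate_betaT_mem_Ico hx.1 n

lemma seqCylinder_succ (hβ : 0 ≤ β) (e : ℕ → ℕ) (n : ℕ) :
    seqCylinder β e (n + 1) = seqCylinder β e n ∩
      (fun x => β ^ (n + 1) * x - prefixValue β e (n + 1)) ⁻¹' Ico 0 1 := by
  ext x
  rw [mem_seqCylinder_succ, mem_inter_iff]
  refine and_congr_right fun hx => ?_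
  rw [mem_preimage, betaDigit_eq_iff hβ hx.1, iterate_betaT_eq_of_mem_seqCylinder hβ hx,
    prefixValue, pow_succ]
  ring_nf

lemma exists_seqCylinder_eq_Ico (hβ : 0 < β) (e : ℕ → ℕ) (n : ℕ) :
    ∃ A B, seqCylinder β e n = Ico A B := by
  induction n with
  | zero => exact ⟨0, 1, by ext; simp [seqCylinder]⟩
  | succ n ih =>
    obtain ⟨A, B, hAB⟩ := ih
    rw [seqCylinder_succ hβ.le, hAB, Real.preimage_mul_sub_Ico (pow_pos hβ _), Ico_inter_Ico]
    exact ⟨_, _, rfl⟩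

lemma seqCylinder_eq_preimage_of_volume (hβ : 0 < β) {e : ℕ → ℕ} {n : ℕ}
    (hfull : volume (seqCylinder β e n) = ENNReal.ofReal (β ^ n)⁻¹) :
    seqCylinder β e n = (fun x => β ^ n * x - prefixValue β e n) ⁻¹' Ico 0 1 := by
  have hpow : 0 < (β ^ n)⁻¹ := inv_pos.2 (pow_pos hβ n)
  obtain ⟨A, B, hAB⟩ := exists_seqCylinder_eq_Ico hβ e n
  have hsub := seqCylinder_subset_preimage hβ.le e n
  rw [hAB, Real.volume_Ico] at hfull
  have hlen : B - A = (β ^ n)⁻¹ := by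
    have hpos : 0 < B - A := ENNReal.ofReal_pos.1 (hfull ▸ ENNReal.ofReal_pos.2 hpow)
    exact (ENNReal.ofReal_eq_ofReal_iff hpos.le hpow.le).1 hfull
  rw [hAB, Real.preimage_mul_sub_Ico (pow_pos hβ n), Ico_subset_Ico_iff (by linarith)] at hsub
  have hwidth : (1 + prefixValue β e n) / β ^ n
      = (0 + prefixValue β e n) / β ^ n + (β ^ n)⁻¹ := by
    field_simp
    ring
  rw [hAB, Real.preimage_mul_sub_Ico (pow_pos hβ n)]
  congr 1 <;> linarith [hsub.1, hsub.2]

lemma exists_cylinder_eq_seqCylinder (β : ℝ) {n : ℕ} (w : Fin n → ℕ) :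
    ∃ e : ℕ → ℕ, cylinder β w = seqCylinder β e n := by
  refine ⟨fun i => if h : i < n then w ⟨i, h⟩ else 0, ?_⟩
  ext x
  simp only [_root_.cylinder, seqCylinder, mem_ofPred_eq, Fin.forall_iff]
  refine and_congr_right fun _ => forall₂_congr fun i hi => ?_
  simp [hi]

lemma mem_cylinder_append {n m : ℕ} (w : Fin n → ℕ) (v : Fin m → ℕ) (x : ℝ) :
    x ∈ cylinder β (Fin.append w v) ↔
      x ∈ cylinder β w ∧ (betaT β)^[n] x ∈ cylinder β v := by
  simp only [_root_.cylinder, mem_ofPred_eq, Fin.forall_fin_add, Fin.append_left, Fin.append_right,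
    Fin.val_castAdd, Fin.val_natAdd, betaDigit_iterate, add_comm n]
  exact ⟨fun ⟨hx, hw, hv⟩ => ⟨⟨hx, hw⟩, iterate_betaT_mem_Ico hx n, hv⟩,
    fun ⟨⟨hx, hw⟩, _, hv⟩ => ⟨hx, hw, hv⟩⟩

lemma cylinder_append_eq_preimage {n m : ℕ} {w : Fin n → ℕ} (v : Fin m → ℕ) {f : ℝ → ℝ}
    (hw : cylinder β w = f ⁻¹' Ico 0 1) (hf : ∀ x ∈ cylinder β w, (betaT β)^[n] x = f x) :
    cylinder β (Fin.append w v) = f ⁻¹' cylinder β v := by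
  ext x
  rw [mem_cylinder_append, mem_preimage]
  constructor
  · rintro ⟨hx, hv⟩
    rwa [← hf x hx]
  · intro hv
    have hx : x ∈ cylinder β w := hw ▸ hv.1
    exact ⟨hx, (hf x hx).symm ▸ hv⟩

end BetaExpansion

open BetaExpansion

theorem stmt7_general (β : ℝ) (hβ : 1 < β) {n m : ℕ} (w : Fin n → ℕ) (v : Fin m → ℕ)
    (hv : v ∈ admissibleWords β m)
    (hwfull : volume (cylinder β w) = ENNReal.ofReal ((β ^ n)⁻¹)) :
    Fin.append w v ∈ admissibleWords β (n + m) ∧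
    volume (cylinder β (Fin.append w v)) =
      volume (cylinder β w) * volume (cylinder β v) := by
  have hβ0 : 0 < β := one_pos.trans hβ
  have hpow : 0 < β ^ n := pow_pos hβ0 n
  obtain ⟨e, he⟩ := exists_cylinder_eq_seqCylinder β w
  set f : ℝ → ℝ := fun x => β ^ n * x - prefixValue β e n
  have hw : cylinder β w = f ⁻¹' Ico 0 1 :=
    he ▸ seqCylinder_eq_preimage_of_volume hβ0 (he ▸ hwfull)
  have happend : cylinder β (Fin.append w v) = f ⁻¹' cylinder β v :=
    cylinder_append_eq_preimage v hw fun x hx =>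
      iterate_betaT_eq_of_mem_seqCylinder hβ0.le (he ▸ hx)
  have hf : Function.Surjective f := fun y =>
    ⟨(y + prefixValue β e n) / β ^ n, by simp only [f]; field_simp; ring⟩
  refine ⟨?_, ?_⟩
  · change (cylinder β (Fin.append w v)).Nonempty
    exact happend ▸ Nonempty.preimage hv hf
  · rw [happend, Real.volume_preimage_mul_sub hpow, hwfull]

/-- If `I_n(ε_1,…,ε_n)` is full, then for any admissible word `(η_1,…,η_m)` the
concatenation is admissible and `|I_{n+m}(ε∗η)| = |I_n(ε)|⋅|I_m(η)|`. -/
theorem stmt7 (β : ℝ) (hβ : 1 < β) {n m : ℕ} (w : Fin n → ℕ) (v : Fin m → ℕ)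
    (hw : w ∈ admissibleWords β n) (hv : v ∈ admissibleWords β m)
    (hwfull : volume (cylinder β w) = ENNReal.ofReal ((β ^ n)⁻¹)) :
    Fin.append w v ∈ admissibleWords β (n + m) ∧
    volume (cylinder β (Fin.append w v)) =
      volume (cylinder β w) * volume (cylinder β v) :=
  stmt7_general β hβ w v hv hwfull
end

section
/- Let β > 1 and let β_m be the unique positive root of 1 = Σ_{i=1}^m ε_i*(1,β)/β_m^i, where (ε_1*(1,β), ε_2*(1,β), …) is the infinite β-expansion of 1 and m satisfies ε_m*(1,β) ≥ 1. Then β_m < β and β_m increases to β as m → ∞. -/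
open Filter MeasureTheory Set

/-- The digits of the β-expansion of 1: `oneDigit β n = ⌊β ⬝ T_β^n(1)⌋`
(0-indexed, so `oneDigit β 0 = ε_1(1,β)`). -/
noncomputable def oneDigit (β : ℝ) (n : ℕ) : ℕ := (⌊β * (betaT β)^[n] 1⌋).toNat

open Classical in
/-- The infinite β-expansion `(ε_1^*(1,β), ε_2^*(1,β), …)` of 1: if the expansion of 1
terminates with last nonzero digit at index `n`, it is the periodic sequence
`(ε_1(1,β),…,ε_n(1,β)-1)^∞`; otherwise it is the expansion of 1 itself. -/
noncomputable def oneStar (β : ℝ) : ℕ → ℕ :=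
  if h : ∃ n, oneDigit β n ≠ 0 ∧ ∀ m, n < m → oneDigit β m = 0 then
    fun k => if k % (h.choose + 1) = h.choose then oneDigit β h.choose - 1
      else oneDigit β (k % (h.choose + 1))
  else oneDigit β

/-!
The sequence `ε*(1,β)` is the greedy expansion of `1` when that expansion does not terminate,
and a purely periodic sequence whose first period sums to `1 - β^{-p}` when it does. In both
cases `Σ ε*_i β^{-i} = 1` with infinitely many nonzero terms, so every partial sum
`Σ_{i≤m} ε*_i β^{-i}` is `< 1` and the partial sums tend to `1`. As
`x ↦ Σ_{i≤m} ε*_i x^{-i}` is strictly decreasing, this gives `β_m < β`; adding a positive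
term to the sum moves the root up, so `β_m` increases; and for `γ < β` one has
`Σ_{i≤m} ε*_i γ^{-i} ≥ (β/γ) Σ_{i≤m} ε*_i β^{-i} → β/γ > 1`, so eventually `β_m > γ`.
-/

open Finset Function Topology

section SumDivPow

variable {a : ℕ → ℝ}

theorem sum_div_pow_le_sum_div_pow (ha : ∀ i, 0 ≤ a i) (n : ℕ) {x y : ℝ} (hx : 0 < x)
    (hxy : x ≤ y) : ∑ i ∈ range n, a i / y ^ (i + 1) ≤ ∑ i ∈ range n, a i / x ^ (i + 1) := by
  gcongr with i
  exact ha i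

theorem sum_div_pow_lt_sum_div_pow (ha : ∀ i, 0 ≤ a i) {n : ℕ} (hn : 0 < a n) {x y : ℝ}
    (hx : 0 < x) (hxy : x < y) :
    ∑ i ∈ range (n + 1), a i / y ^ (i + 1) < ∑ i ∈ range (n + 1), a i / x ^ (i + 1) := by
  rw [sum_range_succ, sum_range_succ]
  exact add_lt_add_of_le_of_lt (sum_div_pow_le_sum_div_pow ha n hx hxy.le)
    (div_lt_div_of_pos_left hn (by positivity) (pow_lt_pow_left₀ hxy hx.le n.succ_ne_zero))

theorem div_mul_sum_div_pow_le (ha : ∀ i, 0 ≤ a i) (n : ℕ) {x y : ℝ} (hx : 0 < x)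
    (hxy : x ≤ y) :
    y / x * ∑ i ∈ range n, a i / y ^ (i + 1) ≤ ∑ i ∈ range n, a i / x ^ (i + 1) := by
  have hy : 0 < y := hx.trans_le hxy
  rw [mul_sum]
  refine sum_le_sum fun i _ => ?_
  have hyx : 1 ≤ y / x := (one_le_div hx).2 hxy
  calc y / x * (a i / y ^ (i + 1)) ≤ (y / x) ^ (i + 1) * (a i / y ^ (i + 1)) := by
        gcongr
        · exact div_nonneg (ha i) (by positivity)
        · exact le_self_pow₀ hyx (Nat.succ_ne_zero i)
    _ = a i / x ^ (i + 1) := by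
        rw [div_pow]
        field_simp

theorem lt_of_sum_div_pow_lt (ha : ∀ i, 0 ≤ a i) {n : ℕ} {x y : ℝ}
    (hx : ∑ i ∈ range n, a i / x ^ (i + 1) = 1) (hy : 0 < y)
    (hsum : ∑ i ∈ range n, a i / y ^ (i + 1) < 1) : x < y := by
  by_contra! hyx
  exact (sum_div_pow_le_sum_div_pow ha n hy hyx).not_gt (hx ▸ hsum)

theorem lt_of_div_lt_sum_div_pow (ha : ∀ i, 0 ≤ a i) {n : ℕ} {x y γ : ℝ} (hx0 : 0 < x)
    (hx : ∑ i ∈ range n, a i / x ^ (i + 1) = 1) (hγ : γ < y)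
    (hsum : γ / y < ∑ i ∈ range n, a i / y ^ (i + 1)) : γ < x := by
  rcases le_or_gt γ 0 with hγ0 | hγ0
  · exact hγ0.trans_lt hx0
  by_contra! hxγ
  have hlarge : 1 < y / γ * ∑ i ∈ range n, a i / y ^ (i + 1) := by
    rw [div_mul_eq_mul_div, one_lt_div hγ0]
    rwa [div_lt_iff₀' (hγ0.trans hγ)] at hsum
  linarith [div_mul_sum_div_pow_le ha n hγ0 hγ.le, sum_div_pow_le_sum_div_pow ha n hx0 hxγ]

theorem le_of_sum_div_pow_eq_one (ha : ∀ i, 0 ≤ a i) {m₁ m₂ : ℕ} (hm : m₁ ≤ m₂) (hpos : 0 < a m₂)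
    {x₁ x₂ : ℝ} (hx₂ : 0 < x₂) (h₁ : ∑ i ∈ range (m₁ + 1), a i / x₁ ^ (i + 1) = 1)
    (h₂ : ∑ i ∈ range (m₂ + 1), a i / x₂ ^ (i + 1) = 1) : x₁ ≤ x₂ := by
  by_contra! hx
  have hx₁ : 0 < x₁ := hx₂.trans hx
  have hmono : ∑ i ∈ range (m₁ + 1), a i / x₁ ^ (i + 1) ≤
      ∑ i ∈ range (m₂ + 1), a i / x₁ ^ (i + 1) :=
    sum_le_sum_of_subset_of_nonneg (range_subset_range.2 (by omega))
      fun i _ _ => div_nonneg (ha i) (by positivity)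
  linarith [sum_div_pow_lt_sum_div_pow ha hpos hx₂ hx]

end SumDivPow

theorem sum_range_lt_of_hasSum {t : ℕ → ℝ} {s : ℝ} (h : HasSum t s) (ht : ∀ i, 0 ≤ t i)
    (hpos : ∃ᶠ i in atTop, 0 < t i) (m : ℕ) : ∑ i ∈ range m, t i < s := by
  obtain ⟨k, hmk, hk⟩ := frequently_atTop.1 hpos m
  calc ∑ i ∈ range m, t i < ∑ i ∈ range (k + 1), t i :=
        sum_lt_sum_of_subset (range_subset_range.2 (by omega)) (self_mem_range_succ k)
          (by simp [hmk]) hk fun i _ _ => ht i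
    _ ≤ s := sum_le_hasSum _ (fun i _ => ht i) h

theorem Function.Periodic.frequently_eq {M : Type*} {f : ℕ → M} {p : ℕ} (hf : Periodic f p)
    (hp : 0 < p) (i : ℕ) : ∃ᶠ n in atTop, f n = f i :=
  frequently_atTop.2 fun m => ⟨i + m * p, le_add_left (Nat.le_mul_of_pos_right m hp),
    hf.nat_mul m i⟩

theorem sum_range_mul_div_pow_of_periodic {a : ℕ → ℝ} {p : ℕ} (ha : Periodic a p) {x : ℝ}
    (hx : x ≠ 0) (j : ℕ) :
    ∑ i ∈ range (p * j), a i / x ^ (i + 1) =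
      (∑ i ∈ range p, a i / x ^ (i + 1)) * ∑ k ∈ range j, (1 / x ^ p) ^ k := by
  induction j with
  | zero => simp
  | succ j ih =>
    have hblock : ∀ i,
        a (p * j + i) / x ^ (p * j + i + 1) = (1 / x ^ p) ^ j * (a i / x ^ (i + 1)) := by
      intro i
      rw [add_comm (p * j) i, mul_comm p j, show a (i + j * p) = a i by simpa using ha.nat_mul j i,
        add_right_comm, pow_add, pow_mul', one_div, inv_pow]
      field_simp
    rw [Nat.mul_succ, sum_range_add, ih, sum_range_succ]
    simp only [hblock, ← mul_sum]
    ring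

theorem hasSum_div_pow_of_periodic {a : ℕ → ℝ} {p : ℕ} (ha : Periodic a p) (hp : 0 < p)
    (ha0 : ∀ i, 0 ≤ a i) {x : ℝ} (hx : 1 < x) :
    HasSum (fun i => a i / x ^ (i + 1))
      ((∑ i ∈ range p, a i / x ^ (i + 1)) * (1 - 1 / x ^ p)⁻¹) := by
  have hx0 : 0 < x := zero_lt_one.trans hx
  have hc : 1 / x ^ p < 1 := (div_lt_one (by positivity)).2 (one_lt_pow₀ hx hp.ne')
  have hterm : ∀ i, 0 ≤ a i / x ^ (i + 1) := fun i => div_nonneg (ha0 i) (by positivity)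
  rw [hasSum_iff_tendsto_nat_of_nonneg hterm, tendsto_iff_tendsto_subseq_of_monotone
    (monotone_nat_of_le_succ fun n => by simp [sum_range_succ, hterm n])
    (tendsto_id.const_mul_atTop' hp)]
  simp only [comp_def, id, sum_range_mul_div_pow_of_periodic ha hx0.ne']
  exact (hasSum_geometric_of_lt_one (by positivity) hc).tendsto_sum_nat.const_mul _

section ExpansionOfOne

variable {β : ℝ}

theorem betaT_iterate_one_mem_Icc (n : ℕ) : (betaT β)^[n] 1 ∈ Icc (0 : ℝ) 1 := by
  cases n with
  | zero => simp
  | succ n =>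
    rw [iterate_succ_apply']
    exact ⟨Int.fract_nonneg _, (Int.fract_lt_one _).le⟩

theorem oneDigit_cast (hβ : 0 ≤ β) (n : ℕ) :
    (oneDigit β n : ℝ) = ⌊β * (betaT β)^[n] 1⌋ := by
  rw [oneDigit, ← Int.cast_natCast,
    Int.toNat_of_nonneg (Int.floor_nonneg.2 (mul_nonneg hβ (betaT_iterate_one_mem_Icc n).1))]

theorem oneDigit_zero_ne_zero (hβ : 1 ≤ β) : oneDigit β 0 ≠ 0 := by
  simp [oneDigit, Int.floor_pos.2 hβ]

theorem betaT_iterate_succ_one (hβ : 0 ≤ β) (n : ℕ) :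
    (betaT β)^[n + 1] 1 = β * (betaT β)^[n] 1 - oneDigit β n := by
  rw [iterate_succ_apply', betaT, Int.fract, oneDigit_cast hβ]

theorem sum_oneDigit_div_pow_add (hβ : 0 < β) (n : ℕ) :
    ∑ i ∈ range n, (oneDigit β i : ℝ) / β ^ (i + 1) + (betaT β)^[n] 1 / β ^ n = 1 := by
  induction n with
  | zero => simp
  | succ n ih =>
    have hstep : (oneDigit β n : ℝ) / β ^ (n + 1) +
        (β * (betaT β)^[n] 1 - oneDigit β n) / β ^ (n + 1) = (betaT β)^[n] 1 / β ^ n := by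
      field_simp
      ring
    rw [sum_range_succ, betaT_iterate_succ_one hβ.le]
    linarith

theorem hasSum_oneDigit (hβ : 1 < β) :
    HasSum (fun i => (oneDigit β i : ℝ) / β ^ (i + 1)) 1 := by
  have hβ0 : 0 < β := zero_lt_one.trans hβ
  rw [hasSum_iff_tendsto_nat_of_nonneg fun i => by positivity]
  have hrem : Tendsto (fun n => (betaT β)^[n] 1 / β ^ n) atTop (𝓝 0) := by
    refine squeeze_zero (fun n => div_nonneg (betaT_iterate_one_mem_Icc n).1 (by positivity))
      (fun n => div_le_div_of_nonneg_right (betaT_iterate_one_mem_Icc n).2 (by positivity))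
      ?_
    simpa only [one_div, comp_def] using
      tendsto_inv_atTop_zero.comp (tendsto_pow_atTop_atTop_of_one_lt hβ)
  have hpartial : (fun n => ∑ i ∈ range n, (oneDigit β i : ℝ) / β ^ (i + 1)) =
      fun n => 1 - (betaT β)^[n] 1 / β ^ n :=
    funext fun n => eq_sub_of_add_eq (sum_oneDigit_div_pow_add hβ0 n)
  rw [hpartial]
  simpa using (tendsto_const_nhds (x := (1 : ℝ))).sub hrem

theorem frequently_oneDigit_ne_zero (hβ : 1 ≤ β)
    (h : ¬ ∃ n, oneDigit β n ≠ 0 ∧ ∀ m, n < m → oneDigit β m = 0) :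
    ∃ᶠ n in atTop, oneDigit β n ≠ 0 := by
  push Not at h
  refine frequently_atTop.2 fun k => ?_
  induction k with
  | zero => exact ⟨0, le_rfl, oneDigit_zero_ne_zero hβ⟩
  | succ k ih =>
    obtain ⟨n, hkn, hn⟩ := ih
    obtain ⟨m, hnm, hm⟩ := h n hn
    exact ⟨m, by omega, hm⟩

theorem oneStar_of_not_terminating
    (h : ¬ ∃ n, oneDigit β n ≠ 0 ∧ ∀ m, n < m → oneDigit β m = 0) :
    oneStar β = oneDigit β := by
  rw [oneStar, dif_neg h]

theorem oneStar_of_last_ne_zero {N : ℕ} (hN : oneDigit β N ≠ 0)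
    (hlast : ∀ m, N < m → oneDigit β m = 0) (k : ℕ) :
    oneStar β k = if k % (N + 1) = N then oneDigit β N - 1 else oneDigit β (k % (N + 1)) := by
  have h : ∃ n, oneDigit β n ≠ 0 ∧ ∀ m, n < m → oneDigit β m = 0 := ⟨N, hN, hlast⟩
  have hchoose : h.choose = N := by
    obtain ⟨hc, hclast⟩ := h.choose_spec
    by_contra hne
    rcases Nat.lt_or_gt_of_ne hne with hlt | hlt
    · exact hN (hclast N hlt)
    · exact hc (hlast _ hlt)
  rw [oneStar, dif_pos h, hchoose]

theorem oneStar_periodic {N : ℕ} (hN : oneDigit β N ≠ 0)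
    (hlast : ∀ m, N < m → oneDigit β m = 0) :
    Periodic (oneStar β) (N + 1) := fun k => by
  simp only [oneStar_of_last_ne_zero hN hlast, Nat.add_mod_right]

theorem sum_range_oneStar_div_pow (hβ : 1 < β) {N : ℕ} (hN : oneDigit β N ≠ 0)
    (hlast : ∀ m, N < m → oneDigit β m = 0) :
    ∑ i ∈ range (N + 1), (oneStar β i : ℝ) / β ^ (i + 1) = 1 - 1 / β ^ (N + 1) := by
  have hdigits : ∑ i ∈ range (N + 1), (oneDigit β i : ℝ) / β ^ (i + 1) = 1 :=
    ((hasSum_oneDigit hβ).unique <| hasSum_sum_of_ne_finset_zero (s := range (N + 1))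
      fun i hi => by simp [hlast i (by simpa using hi)]).symm
  have hlow : ∀ i ∈ range N, oneStar β i = oneDigit β i := fun i hi => by
    have hi : i < N := mem_range.1 hi
    rw [oneStar_of_last_ne_zero hN hlast, Nat.mod_eq_of_lt (by omega), if_neg hi.ne]
  rw [sum_range_succ] at hdigits ⊢
  rw [sum_congr rfl fun i hi => by rw [hlow i hi], oneStar_of_last_ne_zero hN hlast,
    Nat.mod_eq_of_lt N.lt_succ_self, if_pos rfl, Nat.cast_sub (Nat.one_le_iff_ne_zero.2 hN)]
  rw [sub_div]
  linarith

theorem hasSum_oneStar (hβ : 1 < β) : HasSum (fun i => (oneStar β i : ℝ) / β ^ (i + 1)) 1 := by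
  by_cases h : ∃ N, oneDigit β N ≠ 0 ∧ ∀ m, N < m → oneDigit β m = 0
  · obtain ⟨N, hN, hlast⟩ := h
    have hgeom : 1 - 1 / β ^ (N + 1) ≠ 0 :=
      sub_ne_zero.2 ((div_lt_one (by positivity)).2 (one_lt_pow₀ hβ N.succ_ne_zero)).ne'
    have hsum := hasSum_div_pow_of_periodic ((oneStar_periodic hN hlast).comp Nat.cast)
      N.succ_pos (fun i => Nat.cast_nonneg _) hβ
    rwa [comp_def, sum_range_oneStar_div_pow hβ hN hlast, mul_inv_cancel₀ hgeom] at hsum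
  · rw [oneStar_of_not_terminating h]
    exact hasSum_oneDigit hβ

theorem frequently_oneStar_ne_zero (hβ : 1 < β) : ∃ᶠ n in atTop, oneStar β n ≠ 0 := by
  by_cases h : ∃ N, oneDigit β N ≠ 0 ∧ ∀ m, N < m → oneDigit β m = 0
  · obtain ⟨N, hN, hlast⟩ := h
    obtain ⟨i, hi⟩ : ∃ i, oneStar β i ≠ 0 := by
      by_contra! h0
      have hzero : HasSum (fun i => (oneStar β i : ℝ) / β ^ (i + 1)) 0 := by
        simp only [h0, Nat.cast_zero, zero_div]
        exact hasSum_zero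
      exact one_ne_zero ((hasSum_oneStar hβ).unique hzero)
    exact ((oneStar_periodic hN hlast).frequently_eq N.succ_pos i).mono fun n hn => hn ▸ hi
  · rw [oneStar_of_not_terminating h]
    exact frequently_oneDigit_ne_zero hβ.le h

theorem sum_range_oneStar_div_pow_lt_one (hβ : 1 < β) (m : ℕ) :
    ∑ i ∈ range m, (oneStar β i : ℝ) / β ^ (i + 1) < 1 :=
  sum_range_lt_of_hasSum (hasSum_oneStar hβ) (fun i => by positivity)
    ((frequently_oneStar_ne_zero hβ).mono fun i hi =>
      div_pos (Nat.cast_pos.2 (Nat.pos_of_ne_zero hi)) (by positivity)) m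

end ExpansionOfOne

/-- For each `m` with `ε_{m+1}^*(1,β) ≥ 1` let `r m` be the positive root of
`1 = Σ_{i=1}^{m+1} ε_i^*(1,β) x^{-i}`. Then `r m < β`, `r` is monotone on such
indices, and `r m → β` along them. -/
theorem stmt12 (β : ℝ) (hβ : 1 < β) (r : ℕ → ℝ)
    (hr : ∀ m : ℕ, 1 ≤ oneStar β m → 0 < r m ∧
      ∑ i ∈ Finset.range (m + 1), (oneStar β i : ℝ) / r m ^ (i + 1) = 1) :
    (∀ m : ℕ, 1 ≤ oneStar β m → r m < β) ∧
    (∀ m₁ m₂ : ℕ, m₁ ≤ m₂ → 1 ≤ oneStar β m₁ → 1 ≤ oneStar β m₂ → r m₁ ≤ r m₂) ∧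
    Tendsto r (atTop ⊓ Filter.principal {m : ℕ | 1 ≤ oneStar β m}) (nhds β) := by
  have hβ0 : 0 < β := zero_lt_one.trans hβ
  have hcoef : ∀ i, (0 : ℝ) ≤ oneStar β i := fun i => Nat.cast_nonneg _
  have hlt : ∀ m, 1 ≤ oneStar β m → r m < β := fun m hm =>
    lt_of_sum_div_pow_lt hcoef (hr m hm).2 hβ0 (sum_range_oneStar_div_pow_lt_one hβ _)
  refine ⟨hlt, fun m₁ m₂ hm h₁ h₂ => ?_, tendsto_order.2 ⟨fun γ hγ => ?_, fun γ hγ => ?_⟩⟩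
  · exact le_of_sum_div_pow_eq_one hcoef hm (by exact_mod_cast h₂) (hr m₂ h₂).1 (hr m₁ h₁).2
      (hr m₂ h₂).2
  · have hpartial := (tendsto_add_atTop_iff_nat 1).2 (hasSum_oneStar hβ).tendsto_sum_nat
    rw [eventually_inf_principal]
    filter_upwards [hpartial.eventually (lt_mem_nhds ((div_lt_one hβ0).2 hγ))] with m hm hmS
    exact lt_of_div_lt_sum_div_pow hcoef (hr m hmS).1 (hr m hmS).2 hγ hm
  · exact eventually_inf_principal.2 (.of_forall fun m hm => (hlt m hm).trans hγ)
end

section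
/- Let β > 1 and α ∈ [0, α*(β)]. Then the upper Besicovitch set Ē^β(α) = {x ∈ [0,1) : limsup_{n→∞} S_n(x,β)/n ≤ α} has Hausdorff dimension at most h̄^β(α), where h̄^β(α) is the β-adic upper entropy function. -/
/-!
Every `x ∈ Ē^β(α)` has, for each `l`, some length `n ≥ l` whose prefix word satisfies
`Σ εᵢ < n(α + δ)`, so `Ē^β(α)` is covered by arbitrarily deep cylinders of `H̄^β(α, n, δ)`.
A cylinder of length `n` has diameter at most `β⁻ⁿ`, and for `s` above the upper entropy and
`δ` small, `card H̄^β(α, n, δ) ≤ β^{sn}` for large `n`. Hence for `d > s` the `d`-dimensional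
covering sums are tails of a series dominated by `Σ β^{(s-d)n} < ∞`, and `μH[d] Ē^β(α) = 0`.
-/

open Filter MeasureTheory Set

/-- `h^β(α,n,δ) = card{w ∈ Σ_β^n : n(α-δ) < Σᵢ wᵢ < n(α+δ)}`. -/
noncomputable def hCount (β α δ : ℝ) (n : ℕ) : ℕ :=
  Nat.card {w : Fin n → ℕ | w ∈ admissibleWords β n ∧
    (n : ℝ) * (α - δ) < ∑ i, (w i : ℝ) ∧ (∑ i, (w i : ℝ)) < n * (α + δ)}

/-- `h̄^β(α,n,δ) = card{w ∈ Σ_β^n : Σᵢ wᵢ < n(α+δ)}`. -/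
noncomputable def hBarCount (β α δ : ℝ) (n : ℕ) : ℕ :=
  Nat.card {w : Fin n → ℕ | w ∈ admissibleWords β n ∧ (∑ i, (w i : ℝ)) < n * (α + δ)}

open scoped ENNReal Topology

theorem hausdorffMeasure_eq_zero_of_subset_iUnion_tail {X : Type*} [EMetricSpace X]
    [MeasurableSpace X] [BorelSpace X] {ι : ℕ → Type*} [∀ n, Countable (ι n)] (d : ℝ)
    {s : Set X} (C : ∀ n, ι n → Set X) {r : ℕ → ℝ≥0∞} (hr_anti : Antitone r)
    (hr : Tendsto r atTop (𝓝 0)) (hdiam : ∀ n i, Metric.ediam (C n i) ≤ r n)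
    (hcover : ∀ l, s ⊆ ⋃ k, ⋃ i, C (k + l) i)
    (hsum : ∑' n, ∑' i, Metric.ediam (C n i) ^ d ≠ ∞) :
    μH[d] s = 0 := by
  have hle := Measure.hausdorffMeasure_le_liminf_tsum (ι := fun l => Σ k, ι (k + l)) d s r hr
    (fun l σ => C (σ.1 + l) σ.2)
    (Eventually.of_forall fun l σ => (hdiam _ _).trans (hr_anti (Nat.le_add_left l σ.1)))
    (Eventually.of_forall fun l => by simpa only [iUnion_sigma] using hcover l)
  simp only [ENNReal.tsum_sigma'] at hle
  exact le_zero_iff.1 (hle.trans (ENNReal.tendsto_sum_nat_add _ hsum).liminf_eq.le)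

lemma dimH_le_ofReal_of_forall_hausdorffMeasure_eq_zero {X : Type*} [EMetricSpace X]
    [MeasurableSpace X] [BorelSpace X] {s : Set X} {a : ℝ}
    (h : ∀ d : ℝ, max a 0 < d → μH[d] s = 0) : dimH s ≤ ENNReal.ofReal a := by
  have hdim : ∀ d : ℝ, max a 0 < d → dimH s ≤ ENNReal.ofReal d := fun d hd => by
    refine dimH_le_of_hausdorffMeasure_ne_top ?_
    rw [Real.coe_toNNReal _ ((le_max_right a 0).trans hd.le), h d hd]
    exact ENNReal.zero_ne_top
  have hlim : Tendsto ENNReal.ofReal (𝓝[>] (max a 0)) (𝓝 (ENNReal.ofReal (max a 0))) :=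
    ENNReal.continuous_ofReal.continuousWithinAt
  calc dimH s ≤ ENNReal.ofReal (max a 0) :=
        ge_of_tendsto hlim (eventually_nhdsWithin_of_forall hdim)
    _ = ENNReal.ofReal a := by simp

section BetaExpansion

variable {β x : ℝ}

lemma betaT_mem_Ico (β x : ℝ) : betaT β x ∈ Ico (0 : ℝ) 1 :=
  ⟨Int.fract_nonneg _, Int.fract_lt_one _⟩

lemma iterate_betaT_mem_Ico (hx : x ∈ Ico (0 : ℝ) 1) : ∀ n, (betaT β)^[n] x ∈ Ico (0 : ℝ) 1
  | 0 => hx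
  | n + 1 => by rw [Function.iterate_succ_apply']; exact betaT_mem_Ico _ _

lemma betaDigit_cast_eq_floor (hβ : 0 ≤ β) (hx : x ∈ Ico (0 : ℝ) 1) (n : ℕ) :
    (betaDigit β x n : ℝ) = ⌊β * (betaT β)^[n] x⌋ := by
  have hfloor : (0 : ℤ) ≤ ⌊β * (betaT β)^[n] x⌋ :=
    Int.floor_nonneg.2 (mul_nonneg hβ (iterate_betaT_mem_Ico hx n).1)
  rw [betaDigit]
  exact_mod_cast Int.toNat_of_nonneg hfloor

lemma betaDigit_le_floor (hβ : 0 ≤ β) (hx : x ∈ Ico (0 : ℝ) 1) (n : ℕ) :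
    betaDigit β x n ≤ ⌊β⌋₊ := by
  have hT := iterate_betaT_mem_Ico (β := β) hx n
  rw [betaDigit, Int.floor_toNat]
  exact Nat.floor_le_floor (mul_le_of_le_one_right hβ hT.2.le)

lemma iterate_betaT_succ (hβ : 0 ≤ β) (hx : x ∈ Ico (0 : ℝ) 1) (n : ℕ) :
    (betaT β)^[n + 1] x = β * (betaT β)^[n] x - betaDigit β x n := by
  rw [Function.iterate_succ_apply', betaDigit_cast_eq_floor hβ hx n]
  rfl

lemma eq_sum_betaDigit_add_iterate (hβ : 0 < β) (hx : x ∈ Ico (0 : ℝ) 1) (n : ℕ) :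
    x = ∑ i ∈ Finset.range n, (betaDigit β x i : ℝ) * (β ^ (i + 1))⁻¹
      + (betaT β)^[n] x * (β ^ n)⁻¹ := by
  induction n with
  | zero => simp
  | succ n ih =>
    have hstep : (betaT β)^[n + 1] x * (β ^ (n + 1))⁻¹ + betaDigit β x n * (β ^ (n + 1))⁻¹
        = (betaT β)^[n] x * (β ^ n)⁻¹ := by
      rw [iterate_betaT_succ hβ.le hx n]
      field_simp
      ring
    rw [Finset.sum_range_succ]
    linear_combination ih - hstep

lemma abs_sub_le_of_betaDigit_eq {y : ℝ} (hβ : 0 < β) (hx : x ∈ Ico (0 : ℝ) 1)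
    (hy : y ∈ Ico (0 : ℝ) 1) {n : ℕ} (h : ∀ i < n, betaDigit β x i = betaDigit β y i) :
    |x - y| ≤ (β ^ n)⁻¹ := by
  have hsum : ∑ i ∈ Finset.range n, (betaDigit β x i : ℝ) * (β ^ (i + 1))⁻¹
      = ∑ i ∈ Finset.range n, (betaDigit β y i : ℝ) * (β ^ (i + 1))⁻¹ :=
    Finset.sum_congr rfl fun i hi => by rw [h i (Finset.mem_range.1 hi)]
  have hxy : x - y = ((betaT β)^[n] x - (betaT β)^[n] y) * (β ^ n)⁻¹ := by
    linear_combination eq_sum_betaDigit_add_iterate hβ hx n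
      - eq_sum_betaDigit_add_iterate hβ hy n + hsum
  have hTx := iterate_betaT_mem_Ico (β := β) hx n
  have hTy := iterate_betaT_mem_Ico (β := β) hy n
  have hT : |(betaT β)^[n] x - (betaT β)^[n] y| ≤ 1 :=
    abs_sub_le_iff.2 ⟨by linarith [hTx.2, hTy.1], by linarith [hTx.1, hTy.2]⟩
  rw [hxy, abs_mul, abs_of_pos (inv_pos.2 (pow_pos hβ n))]
  exact mul_le_of_le_one_left (by positivity) hT

lemma ediam_cylinder_le (hβ : 0 < β) {n : ℕ} (w : Fin n → ℕ) :
    Metric.ediam (cylinder β w) ≤ ENNReal.ofReal (β ^ n)⁻¹ := by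
  refine Metric.ediam_le fun x hx y hy => ?_
  rw [edist_dist, Real.dist_eq]
  exact ENNReal.ofReal_le_ofReal <| abs_sub_le_of_betaDigit_eq hβ hx.1 hy.1
    fun i hi => (hx.2 ⟨i, hi⟩).trans (hy.2 ⟨i, hi⟩).symm

lemma Sdig_le (hβ : 0 ≤ β) (hx : x ∈ Ico (0 : ℝ) 1) (n : ℕ) : Sdig β x n ≤ ⌊β⌋₊ * n := by
  calc Sdig β x n ≤ ∑ _i ∈ Finset.range n, (⌊β⌋₊ : ℝ) :=
        Finset.sum_le_sum fun i _ => by exact_mod_cast betaDigit_le_floor hβ hx i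
    _ = ⌊β⌋₊ * n := by simp [mul_comm]

end BetaExpansion

section Counting

variable {β α δ : ℝ} {n : ℕ}

def hBarSet (β α δ : ℝ) (n : ℕ) : Set (Fin n → ℕ) :=
  {w | w ∈ admissibleWords β n ∧ (∑ i, (w i : ℝ)) < n * (α + δ)}

lemma hBarCount_eq_card : hBarCount β α δ n = Nat.card (hBarSet β α δ n) := rfl

lemma hBarSet_subset_piFinset (hβ : 0 ≤ β) :
    hBarSet β α δ n ⊆ ↑(Fintype.piFinset fun _ : Fin n => Finset.range (⌊β⌋₊ + 1)) := by
  rintro w ⟨⟨x, hx, hw⟩, -⟩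
  simpa [← hw, Nat.lt_succ_iff] using fun i : Fin n => betaDigit_le_floor hβ hx i

lemma hBarSet_finite (hβ : 0 ≤ β) : (hBarSet β α δ n).Finite :=
  (Finset.finite_toSet _).subset (hBarSet_subset_piFinset hβ)

lemma hBarCount_le_pow (hβ : 0 ≤ β) : hBarCount β α δ n ≤ (⌊β⌋₊ + 1) ^ n := by
  rw [hBarCount_eq_card, Nat.card_coe_set_eq]
  calc (hBarSet β α δ n).ncard
      ≤ (↑(Fintype.piFinset fun _ : Fin n => Finset.range (⌊β⌋₊ + 1)) : Set (Fin n → ℕ)).ncard :=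
        ncard_le_ncard (hBarSet_subset_piFinset hβ) (Finset.finite_toSet _)
    _ = (⌊β⌋₊ + 1) ^ n := by rw [ncard_coe_finset, Fintype.card_piFinset]; simp

lemma log_floor_add_one_nonneg (β : ℝ) : 0 ≤ Real.log (⌊β⌋₊ + 1) :=
  Real.log_nonneg (le_add_of_nonneg_left (Nat.cast_nonneg _))

lemma log_hBarCount_le (hβ : 0 ≤ β) :
    Real.log (hBarCount β α δ n) ≤ n * Real.log (⌊β⌋₊ + 1) := by
  rcases (hBarCount β α δ n).eq_zero_or_pos with h0 | hpos
  · simp only [h0, Nat.cast_zero, Real.log_zero]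
    exact mul_nonneg n.cast_nonneg (log_floor_add_one_nonneg β)
  · rw [← Real.log_pow]
    exact Real.log_le_log (by exact_mod_cast hpos) (by exact_mod_cast hBarCount_le_pow hβ)

lemma isBoundedUnder_log_hBarCount (hβ : 1 < β) :
    IsBoundedUnder (· ≤ ·) atTop
      fun n : ℕ => Real.log (hBarCount β α δ n) / (n * Real.log β) := by
  have hlogβ : 0 < Real.log β := Real.log_pos hβ
  refine isBoundedUnder_of ⟨Real.log (⌊β⌋₊ + 1) / Real.log β, fun n => ?_⟩
  rcases n.eq_zero_or_pos with rfl | hn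
  · simp only [CharP.cast_eq_zero, zero_mul, div_zero]
    exact div_nonneg (log_floor_add_one_nonneg β) hlogβ.le
  · calc Real.log (hBarCount β α δ n) / (n * Real.log β)
        ≤ n * Real.log (⌊β⌋₊ + 1) / (n * Real.log β) :=
          div_le_div_of_nonneg_right (log_hBarCount_le (by linarith)) (by positivity)
      _ = Real.log (⌊β⌋₊ + 1) / Real.log β := mul_div_mul_left _ _ (by positivity)

lemma eventually_hBarCount_le_of_limsup_lt (hβ : 1 < β) {s : ℝ}
    (h : limsup (fun n : ℕ => Real.log (hBarCount β α δ n) / (n * Real.log β)) atTop < s) :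
    ∀ᶠ n : ℕ in atTop, (hBarCount β α δ n : ℝ) ≤ (β ^ s) ^ n := by
  have hβ0 : 0 < β := zero_lt_one.trans hβ
  filter_upwards [eventually_lt_of_limsup_lt h (isBoundedUnder_log_hBarCount hβ),
    eventually_gt_atTop 0] with n hn hn0
  rcases (hBarCount β α δ n).eq_zero_or_pos with h0 | hpos
  · rw [h0, Nat.cast_zero]
    positivity
  · rw [div_lt_iff₀ (by positivity [Real.log_pos hβ])] at hn
    refine (Real.log_le_log_iff (by exact_mod_cast hpos) (by positivity)).1 ?_
    rw [Real.log_pow, Real.log_rpow hβ0]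
    linarith

end Counting

def upperBesicovitchSet (β α : ℝ) : Set ℝ :=
  {x | x ∈ Ico (0 : ℝ) 1 ∧ limsup (fun n : ℕ => Sdig β x n / n) atTop ≤ α}

lemma upperBesicovitchSet_subset_iUnion_cylinder {β α δ : ℝ} (hβ : 0 ≤ β) (hδ : 0 < δ)
    (l : ℕ) :
    upperBesicovitchSet β α ⊆ ⋃ k, ⋃ w : hBarSet β α δ (k + l), cylinder β w.1 := by
  rintro x ⟨hx, hlimsup⟩
  have hbdd : IsBoundedUnder (· ≤ ·) atTop fun n : ℕ => Sdig β x n / n :=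
    isBoundedUnder_of ⟨⌊β⌋₊, fun n => div_le_of_le_mul₀ (by positivity) (by positivity)
      (Sdig_le hβ hx n)⟩
  have hev := eventually_lt_of_limsup_lt (hlimsup.trans_lt (lt_add_of_pos_right α hδ)) hbdd
  obtain ⟨k, hk, hk0⟩ :=
    (((tendsto_add_atTop_nat l).eventually hev).and (eventually_gt_atTop 0)).exists
  have hsum : ∑ i : Fin (k + l), (betaDigit β x i : ℝ) < (k + l : ℕ) * (α + δ) := by
    rw [Fin.sum_univ_eq_sum_range (fun i => (betaDigit β x i : ℝ)), ← Sdig, mul_comm]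
    exact (div_lt_iff₀ (by positivity)).1 hk
  exact mem_iUnion.2 ⟨k, mem_iUnion.2
    ⟨⟨fun i => betaDigit β x i, ⟨x, hx, fun _ => rfl⟩, hsum⟩, hx, fun _ => rfl⟩⟩

lemma tsum_ediam_cylinder_rpow_le {β α δ d : ℝ} (hβ : 0 < β) (hd : 0 ≤ d) (n : ℕ) :
    ∑' w : hBarSet β α δ n, Metric.ediam (cylinder β w.1) ^ d
      ≤ ENNReal.ofReal (hBarCount β α δ n * ((β ^ n)⁻¹) ^ d) := by
  have := (hBarSet_finite (α := α) (δ := δ) (n := n) hβ.le).to_subtype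
  calc ∑' w : hBarSet β α δ n, Metric.ediam (cylinder β w.1) ^ d
      ≤ ∑' _w : hBarSet β α δ n, ENNReal.ofReal (β ^ n)⁻¹ ^ d :=
        ENNReal.tsum_le_tsum fun w => ENNReal.rpow_le_rpow (ediam_cylinder_le hβ w.1) hd
    _ = ENNReal.ofReal (hBarCount β α δ n * ((β ^ n)⁻¹) ^ d) := by
        rw [ENNReal.tsum_const, ENat.card_eq_coe_natCard, ← hBarCount_eq_card,
          ENNReal.ofReal_rpow_of_nonneg (by positivity) hd,
          ENNReal.ofReal_mul (Nat.cast_nonneg _), ENNReal.ofReal_natCast]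
        rfl

lemma summable_hBarCount_mul_rpow {β α δ s d : ℝ} (hβ : 1 < β) (hsd : s < d)
    (hcount : ∀ᶠ n : ℕ in atTop, (hBarCount β α δ n : ℝ) ≤ (β ^ s) ^ n) :
    Summable fun n : ℕ => (hBarCount β α δ n : ℝ) * ((β ^ n)⁻¹) ^ d := by
  have hβ0 : 0 < β := zero_lt_one.trans hβ
  refine .of_norm_bounded_eventually_nat (g := fun n => (β ^ (s - d)) ^ n)
    (summable_geometric_of_lt_one (by positivity)
      (Real.rpow_lt_one_of_one_lt_of_neg hβ (sub_neg.2 hsd))) (hcount.mono fun n hn => ?_)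
  have hpow : ((β ^ n)⁻¹) ^ d = ((β ^ d) ^ n)⁻¹ := by
    rw [Real.inv_rpow (by positivity), ← Real.rpow_natCast_mul hβ0.le, mul_comm,
      Real.rpow_mul_natCast hβ0.le]
  rw [Real.norm_of_nonneg (by positivity), hpow, Real.rpow_sub hβ0, div_pow, div_eq_mul_inv]
  exact mul_le_mul_of_nonneg_right hn (by positivity)

lemma hausdorffMeasure_upperBesicovitchSet_eq_zero {β α δ s d : ℝ} (hβ : 1 < β)
    (hδ : 0 < δ) (hd : 0 ≤ d) (hsd : s < d)
    (hcount : ∀ᶠ n : ℕ in atTop, (hBarCount β α δ n : ℝ) ≤ (β ^ s) ^ n) :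
    μH[d] (upperBesicovitchSet β α) = 0 := by
  have hβ0 : 0 < β := zero_lt_one.trans hβ
  have hr : Tendsto (fun n : ℕ => ENNReal.ofReal (β ^ n)⁻¹) atTop (𝓝 0) := by
    simp only [← inv_pow, ← ENNReal.ofReal_zero]
    exact ENNReal.tendsto_ofReal (tendsto_pow_atTop_nhds_zero_of_lt_one (by positivity)
      (inv_lt_one_of_one_lt₀ hβ))
  have hsum : ∑' n, ∑' w : hBarSet β α δ n, Metric.ediam (cylinder β w.1) ^ d ≠ ∞ := by
    refine ne_top_of_le_ne_top ?_ (ENNReal.tsum_le_tsum (tsum_ediam_cylinder_rpow_le hβ0 hd))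
    rw [← ENNReal.ofReal_tsum_of_nonneg (fun n => by positivity)
      (summable_hBarCount_mul_rpow hβ hsd hcount)]
    exact ENNReal.ofReal_ne_top
  exact hausdorffMeasure_eq_zero_of_subset_iUnion_tail d
    (fun n (w : hBarSet β α δ n) => cylinder β w.1)
    (fun m n hmn => ENNReal.ofReal_le_ofReal (inv_anti₀ (by positivity)
      (pow_le_pow_right₀ hβ.le hmn)))
    hr (fun n w => ediam_cylinder_le hβ0 w.1)
    (upperBesicovitchSet_subset_iUnion_cylinder hβ0.le hδ) hsum

theorem stmt18_general (β : ℝ) (hβ : 1 < β) (α : ℝ) (L : ℝ)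
    (hL : Tendsto (fun δ : ℝ =>
        limsup (fun n : ℕ => Real.log (hBarCount β α δ n) / (n * Real.log β)) atTop)
      (nhdsWithin 0 (Set.Ioi 0)) (nhds L)) :
    dimH {x : ℝ | x ∈ Set.Ico (0:ℝ) 1 ∧
        limsup (fun n : ℕ => Sdig β x n / n) atTop ≤ α} ≤
      ENNReal.ofReal L := by
  refine dimH_le_ofReal_of_forall_hausdorffMeasure_eq_zero fun d hd => ?_
  obtain ⟨s, hLs, hsd⟩ := exists_between hd
  obtain ⟨δ, hδs, hδ⟩ := ((hL.eventually (gt_mem_nhds ((le_max_left L 0).trans_lt hLs))).and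
    self_mem_nhdsWithin).exists
  exact hausdorffMeasure_upperBesicovitchSet_eq_zero hβ hδ ((le_max_right L 0).trans hd.le) hsd
    (eventually_hBarCount_le_of_limsup_lt hβ hδs)

/-- For `0 ≤ α ≤ α*(β)`, the upper Besicovitch set
`Ē^β(α) = {x ∈ [0,1) : limsup_n S_n(x,β)/n ≤ α}` has Hausdorff dimension at most
the upper entropy `h̄^β(α) = lim_{δ→0⁺} limsup_n log h̄^β(α,n,δ)/(n log β)`. -/
theorem stmt18 (β : ℝ) (hβ : 1 < β) (αstar α : ℝ)
    (hstar : ∀ᵐ x ∂(volume.restrict (Set.Ico (0:ℝ) 1)),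
      Tendsto (fun n : ℕ => Sdig β x n / n) atTop (nhds αstar))
    (hα : α ∈ Set.Icc 0 αstar) (L : ℝ)
    (hL : Tendsto (fun δ : ℝ =>
        limsup (fun n : ℕ => Real.log (hBarCount β α δ n) / (n * Real.log β)) atTop)
      (nhdsWithin 0 (Set.Ioi 0)) (nhds L)) :
    dimH {x : ℝ | x ∈ Set.Ico (0:ℝ) 1 ∧
        limsup (fun n : ℕ => Sdig β x n / n) atTop ≤ α} ≤
      ENNReal.ofReal L :=
  stmt18_general β hβ α L hL
end
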